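/- arXiv:math/0608254 — 6 statements merged into one kernel-verified Lean document; each statement's English description precedes it below -/
import Mathlib

section
/- Let X be a stationary Markov chain on a finite alphabet and Y_n = φ(X_n). Define c_j = H(X_{j+1} | Y_j, …, Y_1) − H(X_{j+1} | Y_j, …, Y_1, Y_0) for j ≥ 1. Then c_j ≥ 0 for all j, the partial sums satisfy Σ_{j=1}^n c_j ≤ H(X_1) for every n, and consequently c_n → 0 as n → ∞. -/
open MeasureTheory ProbabilityTheory Real Filter

/-- Shannon entropy of a finitely-valued observable `Z` under the measure `μ`. -/
noncomputable def entropyOf {Ω S : Type*} [MeasurableSpace Ω] [Fintype S]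
    (μ : Measure Ω) (Z : Ω → S) : ℝ :=
  ∑ s : S, Real.negMulLog ((μ (Z ⁻¹' {s})).toReal)

/-- Conditional Shannon entropy `H(U | V) = H(U, V) - H(V)`. -/
noncomputable def condEntropyOf {Ω S T : Type*} [MeasurableSpace Ω] [Fintype S] [Fintype T]
    (μ : Measure Ω) (U : Ω → S) (V : Ω → T) : ℝ :=
  entropyOf μ (fun ω => (U ω, V ω)) - entropyOf μ V

/-- The left shift on two-sided sequences. -/
def shift {A : Type*} (x : ℤ → A) : ℤ → A := fun n => x (n + 1)

/-- A measure on two-sided sequences is Markov: conditionally on the value at time `n`,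
the next value is independent of the earlier ones (expressed via cylinder probabilities). -/
def IsMarkov {A : Type*} [MeasurableSpace A] (μ : Measure (ℤ → A)) : Prop :=
  ∀ (n : ℕ) (w : ℕ → A),
    μ {x | ∀ i : ℕ, i ≤ n + 1 → x (i : ℤ) = w i} * μ {x | x (n : ℤ) = w n}
      = μ {x | ∀ i : ℕ, i ≤ n → x (i : ℤ) = w i}
        * μ {x | x (n : ℤ) = w n ∧ x ((n : ℤ) + 1) = w (n + 1)}

set_option linter.unusedSectionVars false


section POf
variable {Ω : Type*} [MeasurableSpace Ω] (μ : Measure Ω) [IsProbabilityMeasure μ]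

/-- The probability mass function of an observable. -/
noncomputable def pOf {S : Type*} (Z : Ω → S) (s : S) : ℝ := (μ (Z ⁻¹' {s})).toReal

lemma pOf_nonneg {S : Type*} (Z : Ω → S) (s : S) : 0 ≤ pOf μ Z s := ENNReal.toReal_nonneg

lemma pOf_comp {S T : Type*} [Fintype S] [DecidableEq T] (Z : Ω → S)
    (hZ : ∀ s, MeasurableSet (Z ⁻¹' {s})) (F : S → T) (t : T) :
    pOf μ (fun ω => F (Z ω)) t = ∑ s ∈ Finset.univ.filter (fun s => F s = t), pOf μ Z s := by
  have hdisj : (↑(Finset.univ.filter (fun s => F s = t)) : Set S).PairwiseDisjoint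
      (fun s => Z ⁻¹' {s}) := by
    intro s _ s' _ hne
    simp only [Function.onFun]
    apply Set.disjoint_left.mpr
    intro ω h1 h2
    simp only [Set.mem_preimage, Set.mem_singleton_iff] at h1 h2
    exact hne (h1 ▸ h2 ▸ rfl)
  have hset : (fun ω => F (Z ω)) ⁻¹' {t}
      = ⋃ s ∈ Finset.univ.filter (fun s => F s = t), Z ⁻¹' {s} := by
    ext ω
    simp only [Set.mem_preimage, Set.mem_singleton_iff, Set.mem_iUnion, Finset.mem_filter,
      Finset.mem_univ, true_and]
    constructor
    · intro h; exact ⟨Z ω, h, rfl⟩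
    · rintro ⟨s, h1, h2⟩; rw [h2]; exact h1
  rw [pOf, hset, measure_biUnion_finset hdisj (fun s _ => hZ s),
    ENNReal.toReal_sum (fun s _ => measure_ne_top μ _)]
  rfl

lemma sum_pOf {S : Type*} [Fintype S] (Z : Ω → S)
    (hZ : ∀ s, MeasurableSet (Z ⁻¹' {s})) : ∑ s, pOf μ Z s = 1 := by
  classical
  have h := pOf_comp μ Z hZ (fun _ => (0 : Fin 1)) 0
  have h2 : pOf μ (fun _ : Ω => (0 : Fin 1)) 0 = 1 := by
    have : ((fun _ : Ω => (0 : Fin 1)) ⁻¹' {0}) = Set.univ := by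
      ext ω; simp
    rw [pOf, this, measure_univ]; rfl
  rw [h2] at h
  simpa using h.symm

lemma meas_pair {S T : Type*} (U : Ω → S) (V : Ω → T)
    (hU : ∀ s, MeasurableSet (U ⁻¹' {s})) (hV : ∀ t, MeasurableSet (V ⁻¹' {t})) :
    ∀ p : S × T, MeasurableSet ((fun ω => (U ω, V ω)) ⁻¹' {p}) := by
  rintro ⟨s, t⟩
  have : (fun ω => (U ω, V ω)) ⁻¹' {(s, t)} = U ⁻¹' {s} ∩ V ⁻¹' {t} := by
    ext ω; simp [Prod.ext_iff]
  rw [this]; exact (hU s).inter (hV t)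

lemma sum_filter_snd {S T M : Type*} [Fintype S] [Fintype T] [DecidableEq T] [AddCommMonoid M]
    (f : S × T → M) (t : T) :
    ∑ p ∈ Finset.univ.filter (fun p : S × T => p.2 = t), f p = ∑ s : S, f (s, t) := by
  rw [Finset.sum_filter, Fintype.sum_prod_type]
  simp

lemma sum_filter_fst {S T M : Type*} [Fintype S] [Fintype T] [DecidableEq S] [AddCommMonoid M]
    (f : S × T → M) (s : S) :
    ∑ p ∈ Finset.univ.filter (fun p : S × T => p.1 = s), f p = ∑ t : T, f (s, t) := by
  rw [Finset.sum_filter, Fintype.sum_prod_type_right]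
  simp

lemma pOf_marginal_snd {S T : Type*} [Fintype S] [Fintype T] (U : Ω → S) (V : Ω → T)
    (hU : ∀ s, MeasurableSet (U ⁻¹' {s})) (hV : ∀ t, MeasurableSet (V ⁻¹' {t})) (t : T) :
    pOf μ V t = ∑ s : S, pOf μ (fun ω => (U ω, V ω)) (s, t) := by
  classical
  have h := pOf_comp μ (fun ω => (U ω, V ω)) (meas_pair U V hU hV) Prod.snd t
  rw [← sum_filter_snd (fun p => pOf μ (fun ω => (U ω, V ω)) p) t]
  exact h

lemma pOf_marginal_fst {S T : Type*} [Fintype S] [Fintype T] (U : Ω → S) (V : Ω → T)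
    (hU : ∀ s, MeasurableSet (U ⁻¹' {s})) (hV : ∀ t, MeasurableSet (V ⁻¹' {t})) (s : S) :
    pOf μ U s = ∑ t : T, pOf μ (fun ω => (U ω, V ω)) (s, t) := by
  classical
  have h := pOf_comp μ (fun ω => (U ω, V ω)) (meas_pair U V hU hV) Prod.fst s
  rw [← sum_filter_fst (fun p => pOf μ (fun ω => (U ω, V ω)) p) s]
  exact h

end POf


section Gibbs

lemma my_gibbs {ι : Type*} (s : Finset ι) (a b : ι → ℝ)
    (ha : ∀ i ∈ s, 0 ≤ a i) (hb : ∀ i ∈ s, 0 ≤ b i)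
    (hba : ∀ i ∈ s, b i = 0 → a i = 0)
    (hsum : ∑ i ∈ s, b i ≤ ∑ i ∈ s, a i) :
    ∑ i ∈ s, a i * (Real.log (b i) - Real.log (a i)) ≤ 0 := by
  have key : ∀ i ∈ s, a i * (Real.log (b i) - Real.log (a i)) ≤ b i - a i := by
    intro i hi
    rcases eq_or_lt_of_le (ha i hi) with h0 | hpos
    · rw [← h0]; simpa using hb i hi
    · have hbpos : 0 < b i := by
        rcases eq_or_lt_of_le (hb i hi) with h0' | h'
    
        · exact absurd (hba i hi h0'.symm) (ne_of_gt hpos)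
        · exact h'
      rw [← Real.log_div hbpos.ne' hpos.ne']
      have hlog := Real.log_le_sub_one_of_pos (div_pos hbpos hpos)
      calc a i * Real.log (b i / a i) ≤ a i * (b i / a i - 1) :=
            mul_le_mul_of_nonneg_left hlog hpos.le
        _ = b i - a i := by field_simp
  calc ∑ i ∈ s, a i * (Real.log (b i) - Real.log (a i)) ≤ ∑ i ∈ s, (b i - a i) :=
        Finset.sum_le_sum key
    _ ≤ 0 := by rw [Finset.sum_sub_distrib]; linarith

lemma my_negMulLog_sum_le {ι : Type*} (s : Finset ι) (a : ι → ℝ) (ha : ∀ i ∈ s, 0 ≤ a i) :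
    Real.negMulLog (∑ i ∈ s, a i) ≤ ∑ i ∈ s, Real.negMulLog (a i) := by
  have h : Real.negMulLog (∑ i ∈ s, a i)
      = ∑ i ∈ s, (-(a i) * Real.log (∑ j ∈ s, a j)) := by
    rw [Real.negMulLog, neg_mul, ← Finset.sum_mul]
    simp [neg_mul, Finset.sum_neg_distrib]
  rw [h]
  apply Finset.sum_le_sum
  intro i hi
  rcases eq_or_lt_of_le (ha i hi) with h0 | hpos
  · simp [← h0, Real.negMulLog]
  · have hle : a i ≤ ∑ j ∈ s, a j := Finset.single_le_sum ha hi
    have hl := Real.log_le_log hpos hle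
    rw [Real.negMulLog]
    nlinarith

end Gibbs
section Entropy
variable {Ω : Type*} [MeasurableSpace Ω] (μ : Measure Ω) [IsProbabilityMeasure μ]
variable {S T : Type*} [Fintype S] [Fintype T]

lemma meas_preimage_of_fibers {V : Ω → T} (hV : ∀ t, MeasurableSet (V ⁻¹' {t}))
    (s : Set T) : MeasurableSet (V ⁻¹' s) := by
  have : V ⁻¹' s = ⋃ t ∈ s, V ⁻¹' {t} := by ext ω; simp
  rw [this]
  exact MeasurableSet.biUnion s.to_countable (fun t _ => hV t)

lemma entropyOf_eq (Z : Ω → S) : entropyOf μ Z = ∑ s, Real.negMulLog (pOf μ Z s) := rfl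

lemma entropy_snd_le_pair (U : Ω → S) (V : Ω → T)
    (hU : ∀ s, MeasurableSet (U ⁻¹' {s})) (hV : ∀ t, MeasurableSet (V ⁻¹' {t})) :
    entropyOf μ V ≤ entropyOf μ (fun ω => (U ω, V ω)) := by
  rw [entropyOf_eq, entropyOf_eq, Fintype.sum_prod_type_right]
  apply Finset.sum_le_sum
  intro t _
  rw [pOf_marginal_snd μ U V hU hV t]
  exact my_negMulLog_sum_le _ _ (fun s _ => pOf_nonneg μ _ _)

lemma condEntropyOf_nonneg (U : Ω → S) (V : Ω → T)
    (hU : ∀ s, MeasurableSet (U ⁻¹' {s})) (hV : ∀ t, MeasurableSet (V ⁻¹' {t})) :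
    0 ≤ condEntropyOf μ U V :=
  sub_nonneg.mpr (entropy_snd_le_pair μ U V hU hV)

lemma neg_sum_mul_const {g : S → ℝ} {C : ℝ} :
    ∑ s, -(g s * C) = -(∑ s, g s) * C := by
  rw [neg_mul, Finset.sum_mul]
  exact Finset.sum_neg_distrib _

lemma condEntropyOf_eq (U : Ω → S) (V : Ω → T)
    (hU : ∀ s, MeasurableSet (U ⁻¹' {s})) (hV : ∀ t, MeasurableSet (V ⁻¹' {t})) :
    condEntropyOf μ U V = ∑ p : S × T,
      pOf μ (fun ω => (U ω, V ω)) p *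
        (Real.log (pOf μ V p.2) - Real.log (pOf μ (fun ω => (U ω, V ω)) p)) := by
  have key : ∀ t : T, Real.negMulLog (pOf μ V t)
      = ∑ s : S, -(pOf μ (fun ω => (U ω, V ω)) (s, t) * Real.log (pOf μ V t)) := by
    intro t
    rw [neg_sum_mul_const, ← pOf_marginal_snd μ U V hU hV t, Real.negMulLog, neg_mul]
  have h1 : ∑ t : T, Real.negMulLog (pOf μ V t)
      = ∑ p : S × T, -(pOf μ (fun ω => (U ω, V ω)) p * Real.log (pOf μ V p.2)) := by
    rw [Fintype.sum_prod_type_right]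
    exact Finset.sum_congr rfl fun t _ => key t
  rw [condEntropyOf, entropyOf_eq, entropyOf_eq, h1, ← Finset.sum_sub_distrib]
  apply Finset.sum_congr rfl
  intro p _
  rw [Real.negMulLog]
  ring
lemma condEntropyOf_le_comp {W : Type*} [Fintype W] (U : Ω → S) (V : Ω → T)
    (hU : ∀ s, MeasurableSet (U ⁻¹' {s})) (hV : ∀ t, MeasurableSet (V ⁻¹' {t})) (f : T → W) :
    condEntropyOf μ U V ≤ condEntropyOf μ U (fun ω => f (V ω)) := by
  classical
  have hfV : ∀ w, MeasurableSet ((fun ω => f (V ω)) ⁻¹' {w}) := fun w =>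
    meas_preimage_of_fibers hV (f ⁻¹' {w})
  have hpair := meas_pair U V hU hV
  -- notation
  set q : S × T → ℝ := pOf μ (fun ω => (U ω, V ω)) with hqdef
  set qV : T → ℝ := pOf μ V with hqVdef
  set r : S × W → ℝ := pOf μ (fun ω => (U ω, f (V ω))) with hrdef
  set rW : W → ℝ := pOf μ (fun ω => f (V ω)) with hrWdef
  have hq0 : ∀ p, 0 ≤ q p := fun p => pOf_nonneg μ _ p
  have hqV0 : ∀ t, 0 ≤ qV t := fun t => pOf_nonneg μ _ t
  have hr0 : ∀ pw, 0 ≤ r pw := fun pw => pOf_nonneg μ _ pw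
  have hrW0 : ∀ w, 0 ≤ rW w := fun w => pOf_nonneg μ _ w
  have hqVm : ∀ t, qV t = ∑ s, q (s, t) := pOf_marginal_snd μ U V hU hV
  have hrm : ∀ s w, r (s, w) = ∑ t ∈ Finset.univ.filter (fun t => f t = w), q (s, t) := by
    intro s w
    have h := pOf_comp μ (fun ω => (U ω, V ω)) hpair (fun p => (p.1, f p.2)) (s, w)
    rw [hrdef]
    rw [show (pOf μ (fun ω => (U ω, f (V ω))) (s, w))
        = pOf μ (fun ω => ((fun p : S × T => (p.1, f p.2)) ((U ω, V ω)))) (s, w) from rfl, h]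
    rw [Finset.sum_filter, Finset.sum_filter, Fintype.sum_prod_type]
    simp only [Prod.mk.injEq]
    rw [Finset.sum_comm]
    simp [ite_and, Finset.sum_ite_eq']
    rfl
  have hrWm : ∀ w, rW w = ∑ t ∈ Finset.univ.filter (fun t => f t = w), qV t := fun w =>
    pOf_comp μ V hV f w
  have hrWr : ∀ w, rW w = ∑ s, r (s, w) :=
    pOf_marginal_snd μ U (fun ω => f (V ω)) hU hfV
  have hq_le_qV : ∀ p : S × T, q p ≤ qV p.2 := by
    rintro ⟨s, t⟩
    rw [hqVm t]
    exact Finset.single_le_sum (fun s' _ => hq0 (s', t)) (Finset.mem_univ s)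
  have hq_le_r : ∀ p : S × T, q p ≤ r (p.1, f p.2) := by
    rintro ⟨s, t⟩
    rw [hrm s (f t)]
    exact Finset.single_le_sum (f := fun t' => q (s, t')) (fun t' _ => hq0 (s, t'))
      (Finset.mem_filter.mpr ⟨Finset.mem_univ t, rfl⟩)
  have hqV_le_rW : ∀ t, qV t ≤ rW (f t) := by
    intro t
    rw [hrWm (f t)]
    exact Finset.single_le_sum (fun t' _ => hqV0 t')
      (Finset.mem_filter.mpr ⟨Finset.mem_univ t, rfl⟩)
  -- the comparison function
  set b : S × T → ℝ := fun p => qV p.2 * r (p.1, f p.2) / rW (f p.2) with hbdef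
  have hb0 : ∀ p, 0 ≤ b p := fun p =>
    div_nonneg (mul_nonneg (hqV0 p.2) (hr0 (p.1, f p.2))) (hrW0 (f p.2))
  have hpos : ∀ p : S × T, 0 < q p →
      0 < qV p.2 ∧ 0 < r (p.1, f p.2) ∧ 0 < rW (f p.2) := by
    intro p hp
    have h1 : 0 < qV p.2 := lt_of_lt_of_le hp (hq_le_qV p)
    exact ⟨h1, lt_of_lt_of_le hp (hq_le_r p), lt_of_lt_of_le h1 (hqV_le_rW p.2)⟩
  have hba : ∀ p : S × T, b p = 0 → q p = 0 := by
    intro p hbp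
    by_contra hqp
    have hq : 0 < q p := lt_of_le_of_ne (hq0 p) (Ne.symm hqp)
    obtain ⟨h1, h2, h3⟩ := hpos p hq
    have : 0 < b p := div_pos (mul_pos h1 h2) h3
    exact this.ne' hbp
  -- sum of b is at most 1
  have hsumq : ∑ p, q p = 1 := sum_pOf μ _ hpair
  have hsumqV : ∑ t, qV t = 1 := sum_pOf μ _ hV
  have hbsum : ∑ p, b p ≤ ∑ p, q p := by
    rw [hsumq]
    have h1 : ∑ p : S × T, b p = ∑ t, qV t * rW (f t) / rW (f t) := by
      rw [Fintype.sum_prod_type_right]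
      apply Finset.sum_congr rfl
      intro t _
      rw [show ∑ s, b (s, t) = ∑ s, qV t * r (s, f t) / rW (f t) from rfl,
        ← Finset.sum_div, ← Finset.mul_sum, ← hrWr (f t)]
    rw [h1]
    calc ∑ t, qV t * rW (f t) / rW (f t) ≤ ∑ t, qV t := by
          apply Finset.sum_le_sum
          intro t _
          rcases eq_or_ne (rW (f t)) 0 with h0 | hne
          · rw [h0]; simp [hqV0 t]
          · rw [mul_div_assoc, div_self hne, mul_one]
      _ = 1 := hsumqV
  -- Gibbs
  have hgibbs := my_gibbs Finset.univ q b (fun p _ => hq0 p) (fun p _ => hb0 p)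
    (fun p _ => hba p) hbsum
  -- rewrite both conditional entropies
  have hL := condEntropyOf_eq μ U V hU hV
  have hR := condEntropyOf_eq μ U (fun ω => f (V ω)) hU hfV
  -- express RHS as a sum over S × T
  have hRHS : condEntropyOf μ U (fun ω => f (V ω))
      = ∑ p : S × T, q p * (Real.log (rW (f p.2)) - Real.log (r (p.1, f p.2))) := by
    rw [hR]
    rw [Fintype.sum_prod_type, Fintype.sum_prod_type]
    apply Finset.sum_congr rfl
    intro s _
    have step1 : ∀ w, r (s, w) * (Real.log (rW w) - Real.log (r (s, w)))
        = ∑ t ∈ Finset.univ.filter (fun t => f t = w),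
            q (s, t) * (Real.log (rW w) - Real.log (r (s, w))) := by
      intro w
      rw [← Finset.sum_mul, ← hrm s w]
    calc ∑ w, r (s, w) * (Real.log (rW w) - Real.log (r (s, w)))
        = ∑ w, ∑ t ∈ Finset.univ.filter (fun t => f t = w),
            q (s, t) * (Real.log (rW (f t)) - Real.log (r (s, f t))) := by
          apply Finset.sum_congr rfl
          intro w _
          rw [step1 w]
          apply Finset.sum_congr rfl
          intro t ht
          rw [(Finset.mem_filter.mp ht).2]
      _ = ∑ t, q (s, t) * (Real.log (rW (f t)) - Real.log (r (s, f t))) :=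
          Finset.sum_fiberwise Finset.univ f _
  -- conclude
  have hdiff : condEntropyOf μ U V - condEntropyOf μ U (fun ω => f (V ω))
      = ∑ p : S × T, q p * (Real.log (b p) - Real.log (q p)) := by
    rw [hL, hRHS, ← Finset.sum_sub_distrib]
    simp only [← hqdef, ← hqVdef]
    apply Finset.sum_congr rfl
    intro p _
    rcases eq_or_lt_of_le (hq0 p) with h0 | hq
    · rw [← h0]; ring
    · obtain ⟨h1, h2, h3⟩ := hpos p hq
      rw [hbdef]
      show q p * (Real.log (qV p.2) - Real.log (q p))
          - q p * (Real.log (rW (f p.2)) - Real.log (r (p.1, f p.2)))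
        = q p * (Real.log (qV p.2 * r (p.1, f p.2) / rW (f p.2)) - Real.log (q p))
      rw [Real.log_div (by positivity) h3.ne', Real.log_mul h1.ne' h2.ne']
      ring
  linarith [hgibbs, hdiff.symm.le, hdiff.le]
lemma condEntropyOf_le_entropy (U : Ω → S) (V : Ω → T)
    (hU : ∀ s, MeasurableSet (U ⁻¹' {s})) (hV : ∀ t, MeasurableSet (V ⁻¹' {t})) :
    condEntropyOf μ U V ≤ entropyOf μ U := by
  classical
  have hpair := meas_pair U V hU hV
  set q : S × T → ℝ := pOf μ (fun ω => (U ω, V ω)) with hqdef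
  set qV : T → ℝ := pOf μ V with hqVdef
  set qU : S → ℝ := pOf μ U with hqUdef
  have hq0 : ∀ p, 0 ≤ q p := fun p => pOf_nonneg μ _ p
  have hqV0 : ∀ t, 0 ≤ qV t := fun t => pOf_nonneg μ _ t
  have hqU0 : ∀ s, 0 ≤ qU s := fun s => pOf_nonneg μ _ s
  have hqVm : ∀ t, qV t = ∑ s, q (s, t) := pOf_marginal_snd μ U V hU hV
  have hqUm : ∀ s, qU s = ∑ t, q (s, t) := pOf_marginal_fst μ U V hU hV
  have hq_le_qV : ∀ p : S × T, q p ≤ qV p.2 := by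
    rintro ⟨s, t⟩
    rw [hqVm t]
    exact Finset.single_le_sum (fun s' _ => hq0 (s', t)) (Finset.mem_univ s)
  have hq_le_qU : ∀ p : S × T, q p ≤ qU p.1 := by
    rintro ⟨s, t⟩
    rw [hqUm s]
    exact Finset.single_le_sum (fun t' _ => hq0 (s, t')) (Finset.mem_univ t)
  set b : S × T → ℝ := fun p => qU p.1 * qV p.2 with hbdef
  have hb0 : ∀ p, 0 ≤ b p := fun p => mul_nonneg (hqU0 p.1) (hqV0 p.2)
  have hba : ∀ p : S × T, b p = 0 → q p = 0 := by
    intro p hbp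
    by_contra hqp
    have hq : 0 < q p := lt_of_le_of_ne (hq0 p) (Ne.symm hqp)
    have h1 : 0 < qU p.1 := lt_of_lt_of_le hq (hq_le_qU p)
    have h2 : 0 < qV p.2 := lt_of_lt_of_le hq (hq_le_qV p)
    exact (mul_pos h1 h2).ne' hbp
  have hsumq : ∑ p, q p = 1 := sum_pOf μ _ hpair
  have hsumqU : ∑ s, qU s = 1 := sum_pOf μ _ hU
  have hsumqV : ∑ t, qV t = 1 := sum_pOf μ _ hV
  have hbsum : ∑ p, b p ≤ ∑ p, q p := by
    rw [hsumq]
    have : ∑ p : S × T, b p = (∑ s, qU s) * (∑ t, qV t) := by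
      rw [Finset.sum_mul_sum, Fintype.sum_prod_type]
    rw [this, hsumqU, hsumqV, mul_one]
  have hgibbs := my_gibbs Finset.univ q b (fun p _ => hq0 p) (fun p _ => hb0 p)
    (fun p _ => hba p) hbsum
  have hL := condEntropyOf_eq μ U V hU hV
  have hHU : entropyOf μ U = ∑ p : S × T, -(q p * Real.log (qU p.1)) := by
    rw [entropyOf_eq, Fintype.sum_prod_type]
    apply Finset.sum_congr rfl
    intro s _
    rw [show ∑ t, -(q (s, t) * Real.log (qU s)) = -(∑ t, q (s, t)) * Real.log (qU s) from by
      rw [neg_mul, Finset.sum_mul]; exact Finset.sum_neg_distrib _]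
    rw [← hqUm s, Real.negMulLog, neg_mul]
  have hdiff : condEntropyOf μ U V - entropyOf μ U
      = ∑ p : S × T, q p * (Real.log (b p) - Real.log (q p)) := by
    rw [hL, hHU, ← Finset.sum_sub_distrib]
    simp only [← hqdef, ← hqVdef]
    apply Finset.sum_congr rfl
    intro p _
    rcases eq_or_lt_of_le (hq0 p) with h0 | hq
    · rw [← h0]; ring
    · have h1 : 0 < qU p.1 := lt_of_lt_of_le hq (hq_le_qU p)
      have h2 : 0 < qV p.2 := lt_of_lt_of_le hq (hq_le_qV p)
      rw [hbdef]
      show q p * (Real.log (qV p.2) - Real.log (q p)) - -(q p * Real.log (qU p.1))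
        = q p * (Real.log (qU p.1 * qV p.2) - Real.log (q p))
      rw [Real.log_mul h1.ne' h2.ne']
      ring
  linarith [hgibbs, hdiff.le]
end Entropy
section ShiftPart

lemma entropyOf_shift {A : Type*} [MeasurableSpace A] {S : Type*} [Fintype S]
    (μ : Measure (ℤ → A)) (hstat : MeasurePreserving shift μ μ)
    (Z : (ℤ → A) → S) (hZ : ∀ s, MeasurableSet (Z ⁻¹' {s})) :
    entropyOf μ (fun x => Z (shift x)) = entropyOf μ Z := by
  unfold entropyOf
  apply Finset.sum_congr rfl
  intro s _
  have h : μ ((fun x => Z (shift x)) ⁻¹' {s}) = μ (Z ⁻¹' {s}) :=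
    hstat.measure_preimage (hZ s).nullMeasurableSet
  rw [h]

lemma condEntropyOf_shift {A : Type*} [MeasurableSpace A] {S T : Type*} [Fintype S] [Fintype T]
    (μ : Measure (ℤ → A)) (hstat : MeasurePreserving shift μ μ)
    (U : (ℤ → A) → S) (V : (ℤ → A) → T)
    (hU : ∀ s, MeasurableSet (U ⁻¹' {s})) (hV : ∀ t, MeasurableSet (V ⁻¹' {t})) :
    condEntropyOf μ (fun x => U (shift x)) (fun x => V (shift x)) = condEntropyOf μ U V := by
  have h1 : entropyOf μ (fun x => (U (shift x), V (shift x)))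
      = entropyOf μ (fun x => (U x, V x)) :=
    entropyOf_shift μ hstat (fun x => (U x, V x)) (meas_pair U V hU hV)
  have h2 : entropyOf μ (fun x => V (shift x)) = entropyOf μ V :=
    entropyOf_shift μ hstat V hV
  show entropyOf μ (fun x => (U (shift x), V (shift x)))
      - entropyOf μ (fun x => V (shift x)) = _
  rw [h1, h2]
  rfl

lemma meas_phi_vec {A B : Type*} [Finite A] [MeasurableSpace A] [MeasurableSingletonClass A]
    (φ : A → B) {j : ℕ} (g : Fin j → ℤ) (w : Fin j → B) :
    MeasurableSet ((fun x : ℤ → A => fun i : Fin j => φ (x (g i))) ⁻¹' {w}) := by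
  have h : (fun x : ℤ → A => fun i : Fin j => φ (x (g i))) ⁻¹' {w}
      = ⋂ i : Fin j, (fun x : ℤ → A => x (g i)) ⁻¹' (φ ⁻¹' {w i}) := by
    ext x
    simp [funext_iff]
  rw [h]
  exact MeasurableSet.iInter fun i =>
    measurable_pi_apply (g i) ((Set.toFinite (φ ⁻¹' {w i})).measurableSet)

/-- The auxiliary decreasing sequence `E k = H(X_{k+1} | Y_k, …, Y_0)`. -/
noncomputable def Eseq {A B : Type*} [Fintype A] [MeasurableSpace A] [Fintype B]
    (μ : Measure (ℤ → A)) (φ : A → B) (k : ℕ) : ℝ :=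
  condEntropyOf μ (fun x : ℤ → A => x ((k : ℤ) + 1))
    (fun x => fun i : Fin (k + 1) => φ (x ((i : ℕ) : ℤ)))

end ShiftPart

/-- For a stationary Markov chain `X` and `Y_n = φ(X_n)`, the quantities
`c_j = H(X_{j+1} | Y_j, …, Y_1) − H(X_{j+1} | Y_j, …, Y_1, Y_0)` are nonnegative, their partial
sums are bounded by `H(X_1)`, and consequently `c_n → 0` as `n → ∞`. -/
theorem stmt4 {A B : Type*} [Fintype A] [MeasurableSpace A] [MeasurableSingletonClass A]
    [Fintype B]
    (μ : Measure (ℤ → A)) [IsProbabilityMeasure μ]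
    (hstat : MeasurePreserving shift μ μ) (hmarkov : IsMarkov μ) (φ : A → B)
    (c : ℕ → ℝ)
    (hc : ∀ j : ℕ, c j =
      condEntropyOf μ (fun x => x ((j : ℤ) + 1))
        (fun x => fun i : Fin j => φ (x (((i : ℕ) : ℤ) + 1)))
      - condEntropyOf μ (fun x => x ((j : ℤ) + 1))
        (fun x => fun i : Fin (j + 1) => φ (x ((i : ℕ) : ℤ)))) :
    (∀ j : ℕ, 1 ≤ j → 0 ≤ c j) ∧
    (∀ n : ℕ, ∑ j ∈ Finset.Icc 1 n, c j ≤ entropyOf μ (fun x => x (1 : ℤ))) ∧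
    Tendsto c atTop (nhds 0) := by

  classical
  have hXm : ∀ (m : ℤ) (s : A), MeasurableSet ((fun x : ℤ → A => x m) ⁻¹' {s}) :=
    fun m s => measurable_pi_apply m (measurableSet_singleton s)
  have hV2m : ∀ (k : ℕ) (w : Fin (k + 1) → B),
      MeasurableSet ((fun x : ℤ → A => fun i : Fin (k + 1) => φ (x ((i : ℕ) : ℤ))) ⁻¹' {w}) :=
    fun k => meas_phi_vec φ (fun i : Fin (k + 1) => ((i : ℕ) : ℤ))
  -- nonnegativity of every `c j`
  have hcnn : ∀ j : ℕ, 0 ≤ c j := by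
    intro j
    rw [hc j]
    have hcomp := condEntropyOf_le_comp μ (fun x : ℤ → A => x ((j : ℤ) + 1))
      (fun x => fun i : Fin (j + 1) => φ (x ((i : ℕ) : ℤ)))
      (hXm _) (hV2m j) (fun g : Fin (j + 1) → B => fun i : Fin j => g i.succ)
    have heq : (fun x : ℤ → A => (fun g : Fin (j + 1) → B => fun i : Fin j => g i.succ)
        ((fun x : ℤ → A => fun i : Fin (j + 1) => φ (x ((i : ℕ) : ℤ))) x))
        = (fun x : ℤ → A => fun i : Fin j => φ (x (((i : ℕ) : ℤ) + 1))) := by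
      funext x i
      show φ (x ((i.succ : ℕ) : ℤ)) = φ (x (((i : ℕ) : ℤ) + 1))
      have : ((i.succ : ℕ) : ℤ) = ((i : ℕ) : ℤ) + 1 := by
        simp [Fin.val_succ]
      rw [this]
    have hfin := hcomp.trans_eq
      (congrArg (fun Vf => condEntropyOf μ (fun x : ℤ → A => x ((j : ℤ) + 1)) Vf) heq)
    linarith
  -- shift identity
  have hshift : ∀ k : ℕ,
      condEntropyOf μ (fun x : ℤ → A => x (((k + 1 : ℕ) : ℤ) + 1))
        (fun x => fun i : Fin (k + 1) => φ (x (((i : ℕ) : ℤ) + 1))) = Eseq μ φ k := by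
    intro k
    have hcast : (((k + 1 : ℕ) : ℤ) + 1) = ((k : ℤ) + 1) + 1 := by push_cast; ring
    rw [show (fun x : ℤ → A => x (((k + 1 : ℕ) : ℤ) + 1))
        = (fun x : ℤ → A => x (((k : ℤ) + 1) + 1)) from by rw [hcast]]
    exact condEntropyOf_shift μ hstat (fun x : ℤ → A => x ((k : ℤ) + 1))
      (fun x : ℤ → A => fun i : Fin (k + 1) => φ (x ((i : ℕ) : ℤ))) (hXm _) (hV2m k)
  have hck : ∀ k : ℕ, c (k + 1) = Eseq μ φ k - Eseq μ φ (k + 1) := by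
    intro k
    rw [hc (k + 1), hshift k]
    rfl
  have hEnn : ∀ k : ℕ, 0 ≤ Eseq μ φ k := fun k =>
    condEntropyOf_nonneg μ _ _ (hXm _) (hV2m k)
  have hE0 : Eseq μ φ 0 ≤ entropyOf μ (fun x : ℤ → A => x (1 : ℤ)) := by
    have h1 : Eseq μ φ 0 ≤ entropyOf μ (fun x : ℤ → A => x (((0 : ℕ) : ℤ) + 1)) :=
      condEntropyOf_le_entropy μ _ _ (hXm _) (hV2m 0)
    have h2 : (((0 : ℕ) : ℤ) + 1) = (1 : ℤ) := by simp
    rw [h2] at h1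
    exact h1
  have hsum : ∀ n : ℕ, ∑ j ∈ Finset.Icc 1 n, c j = Eseq μ φ 0 - Eseq μ φ n := by
    intro n
    induction n with
    | zero => simp
    | succ n ih =>
      rw [Finset.sum_Icc_succ_top (by omega : 1 ≤ n + 1), ih, hck n]
      ring
  refine ⟨fun j _ => hcnn j, fun n => ?_, ?_⟩
  · rw [hsum n]
    have := hEnn n
    linarith
  · have hanti : Antitone (Eseq μ φ) := antitone_nat_of_succ_le (fun k => by
      have h1 := hcnn (k + 1)
      rw [hck k] at h1
      linarith)
    have hbdd : BddBelow (Set.range (Eseq μ φ)) := by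
      refine ⟨0, ?_⟩
      rintro y ⟨k, rfl⟩
      exact hEnn k
    have htend : Tendsto (Eseq μ φ) atTop (nhds (⨅ k, Eseq μ φ k)) :=
      tendsto_atTop_ciInf hanti hbdd
    have htend' : Tendsto (fun k => Eseq μ φ (k + 1)) atTop (nhds (⨅ k, Eseq μ φ k)) :=
      htend.comp (tendsto_add_atTop_nat 1)
    have hc1 : Tendsto (fun k => c (k + 1)) atTop (nhds 0) := by
      have h := htend.sub htend'
      rw [sub_self] at h
      exact h.congr (fun k => (hck k).symm)
    exact (tendsto_add_atTop_iff_nat 1).mp hc1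
end

section
/- Let X be a stationary ergodic process on a finite alphabet with continuous conditional probabilities, i.e. r_n := sup over x_0,…,x_n and over two continuations x′, x″ of |ℙ(X_0 = x_0 | X_1 = x_1, …, X_n = x_n, X_{n+1} = x′_{n+1}, …) − ℙ(X_0 = x_0 | X_1 = x_1, …, X_n = x_n, X_{n+1} = x″_{n+1}, …)| tends to 0 as n → ∞. Let Y_n = φ(X_n) and D_n = lim_{m→∞} H(Y_0 | Y_1, …, Y_n, X_{n+1}, …, X_{n+m}). Then D_n → h(Y) as n → ∞. -/
open MeasureTheory ProbabilityTheory Real Filter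

/-- The finite-window conditional probability
`ℙ(X_0 = a | X_1 = w_1, …, X_n = w_n, X_{n+1} = u_1, …, X_{n+m} = u_m)`. -/
noncomputable def finiteWindowCondProb {A : Type*} [MeasurableSpace A]
    (μ : Measure (ℤ → A)) (a : A) (n : ℕ) (w : ℕ → A) (m : ℕ) (u : ℕ → A) : ℝ :=
  (μ {x | x 0 = a ∧ (∀ i : ℕ, 1 ≤ i → i ≤ n → x (i : ℤ) = w i) ∧
      (∀ j : ℕ, 1 ≤ j → j ≤ m → x ((n : ℤ) + (j : ℤ)) = u j)}).toReal /
  (μ {x | (∀ i : ℕ, 1 ≤ i → i ≤ n → x (i : ℤ) = w i) ∧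
      (∀ j : ℕ, 1 ≤ j → j ≤ m → x ((n : ℤ) + (j : ℤ)) = u j)}).toReal

namespace Stmt8Aux

open Finset

set_option linter.unusedSectionVars false

variable {Ω : Type*} [MeasurableSpace Ω] {S T W : Type*}

/-- All fibers measurable. -/
def Mble (Z : Ω → S) : Prop := ∀ s : S, MeasurableSet (Z ⁻¹' {s})

lemma Mble.pair {U : Ω → S} {V : Ω → T} (hU : Mble U) (hV : Mble V) :
    Mble (fun ω => (U ω, V ω)) := by
  intro p
  have h : (fun ω => (U ω, V ω)) ⁻¹' {p} = U ⁻¹' {p.1} ∩ V ⁻¹' {p.2} := by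
    ext ω; simp [Prod.ext_iff]
  rw [h]; exact (hU _).inter (hV _)

lemma Mble.comp [Fintype T] {Z : Ω → T} (hZ : Mble Z) (g : T → W) :
    Mble (fun ω => g (Z ω)) := by
  intro w
  have h : (fun ω => g (Z ω)) ⁻¹' {w} = ⋃ t ∈ {t : T | g t = w}, Z ⁻¹' {t} := by
    ext ω; simp
  rw [h]
  exact MeasurableSet.biUnion (Set.to_countable _) (fun t _ => hZ t)

variable (μ : Measure Ω) [IsProbabilityMeasure μ]

lemma pm_nonneg (Z : Ω → S) (s : S) : 0 ≤ (μ (Z ⁻¹' {s})).toReal := ENNReal.toReal_nonneg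

lemma pm_le_one (Z : Ω → S) (s : S) : (μ (Z ⁻¹' {s})).toReal ≤ 1 := by
  simpa using ENNReal.toReal_mono ENNReal.one_ne_top (prob_le_one (μ := μ) (s := Z ⁻¹' {s}))

lemma pm_mono {Z : Ω → S} {Z' : Ω → T} {s t} (h : Z ⁻¹' {s} ⊆ Z' ⁻¹' {t}) :
    (μ (Z ⁻¹' {s})).toReal ≤ (μ (Z' ⁻¹' {t})).toReal :=
  ENNReal.toReal_mono (measure_ne_top μ _) (measure_mono h)

lemma toReal_measure_comp_preimage [Fintype T] [DecidableEq W] {Z : Ω → T} (hZ : Mble Z)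
    (g : T → W) (w : W) :
    (μ ((fun ω => g (Z ω)) ⁻¹' {w})).toReal
      = ∑ t : T, if g t = w then (μ (Z ⁻¹' {t})).toReal else 0 := by
  have hset : ((fun ω => g (Z ω)) ⁻¹' {w})
      = ⋃ t ∈ (Finset.univ.filter fun t => g t = w), Z ⁻¹' {t} := by
    ext ω; simp
  have hdisj : Set.PairwiseDisjoint
      (↑(Finset.univ.filter fun t => g t = w) : Set T) (fun t => Z ⁻¹' {t}) := by
    intro a _ b _ hab
    exact Set.disjoint_left.2 fun ω h1 h2 => hab (by
      simp only [Set.mem_preimage, Set.mem_singleton_iff] at h1 h2; rw [← h1, ← h2])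
  rw [hset, measure_biUnion_finset hdisj (fun t _ => hZ t), ENNReal.toReal_sum
    (fun t _ => measure_ne_top μ _), Finset.sum_filter]

lemma sum_pm [Fintype T] {Z : Ω → T} (hZ : Mble Z) :
    ∑ t : T, (μ (Z ⁻¹' {t})).toReal = 1 := by
  classical
  have h := toReal_measure_comp_preimage μ hZ (fun _ => (0 : Fin 1)) 0
  have h2 : ((fun ω => (0 : Fin 1)) ⁻¹' {(0 : Fin 1)} : Set Ω) = Set.univ := by
    ext ω; simp
  rw [h2] at h
  simpa using h.symm

lemma sum_pm_pair_left [Fintype S] [Fintype T] {U : Ω → S} {V : Ω → T}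
    (h : Mble (fun ω => (U ω, V ω))) (t : T) :
    ∑ s : S, (μ ((fun ω => (U ω, V ω)) ⁻¹' {(s, t)})).toReal = (μ (V ⁻¹' {t})).toReal := by
  classical
  have h1 := toReal_measure_comp_preimage μ h Prod.snd t
  have h2 : ((fun ω => Prod.snd (U ω, V ω)) ⁻¹' {t} : Set Ω) = V ⁻¹' {t} := rfl
  rw [h2, Fintype.sum_prod_type] at h1
  simpa [Finset.sum_ite_eq'] using h1.symm

end Stmt8Aux

namespace Stmt8Aux
open Finset
set_option linter.unusedSectionVars false
variable {Ω : Type*} [MeasurableSpace Ω] {S T W : Type*}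
variable (μ : Measure Ω) [IsProbabilityMeasure μ]

lemma entropyOf_nonneg [Fintype S] (Z : Ω → S) : 0 ≤ entropyOf μ Z :=
  Finset.sum_nonneg fun s _ => negMulLog_nonneg (pm_nonneg μ Z s) (pm_le_one μ Z s)

lemma entropyOf_comp_injective [Fintype S] [Fintype T] (Z : Ω → S) (e : S → T)
    (he : Function.Injective e) :
    entropyOf μ (fun ω => e (Z ω)) = entropyOf μ Z := by
  classical
  unfold entropyOf
  have h0 : ∀ t : T, t ∉ Finset.univ.image e → ((fun ω => e (Z ω)) ⁻¹' {t} : Set Ω) = ∅ := by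
    intro t ht
    simp only [Finset.mem_image, Finset.mem_univ, true_and, not_exists] at ht
    ext ω; simp only [Set.mem_preimage, Set.mem_singleton_iff, Set.mem_empty_iff_false,
      iff_false]
    exact ht (Z ω)
  calc ∑ t : T, negMulLog ((μ ((fun ω => e (Z ω)) ⁻¹' {t})).toReal)
      = ∑ t ∈ Finset.univ.image e, negMulLog ((μ ((fun ω => e (Z ω)) ⁻¹' {t})).toReal) := by
        refine (Finset.sum_subset (Finset.subset_univ _) ?_).symm
        intro t _ ht; rw [h0 t ht]; simp
    _ = ∑ s : S, negMulLog ((μ ((fun ω => e (Z ω)) ⁻¹' {e s})).toReal) :=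
        Finset.sum_image (fun a _ b _ h => he h)
    _ = ∑ s : S, negMulLog ((μ (Z ⁻¹' {s})).toReal) := by
        refine Finset.sum_congr rfl fun s _ => ?_
        have : ((fun ω => e (Z ω)) ⁻¹' {e s} : Set Ω) = Z ⁻¹' {s} := by
          ext ω; simp [he.eq_iff]
        rw [this]

lemma entropyOf_unique [Fintype S] [Subsingleton S] (Z : Ω → S) : entropyOf μ Z = 0 := by
  unfold entropyOf
  refine Finset.sum_eq_zero fun s _ => ?_
  have : Z ⁻¹' {s} = Set.univ := by
    ext ω; simp [Subsingleton.elim (Z ω) s]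
  simp [this]

lemma entropyOf_pair_swap [Fintype S] [Fintype T] (U : Ω → S) (V : Ω → T) :
    entropyOf μ (fun ω => (U ω, V ω)) = entropyOf μ (fun ω => (V ω, U ω)) :=
  (entropyOf_comp_injective μ (fun ω => (V ω, U ω)) Prod.swap Prod.swap_injective :
    entropyOf μ (fun ω => (U ω, V ω)) = entropyOf μ (fun ω => (V ω, U ω)))

lemma chainRule {W' : Type*} [Fintype S] [Fintype T] [Fintype W']
    (U : Ω → S) (V : Ω → T) (Wv : Ω → W') :
    condEntropyOf μ (fun ω => (U ω, V ω)) Wv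
      = condEntropyOf μ U (fun ω => (V ω, Wv ω)) + condEntropyOf μ V Wv := by
  unfold condEntropyOf
  have h1 : entropyOf μ (fun ω => ((U ω, V ω), Wv ω))
      = entropyOf μ (fun ω => (U ω, (V ω, Wv ω))) :=
    (entropyOf_comp_injective μ (fun ω => (U ω, (V ω, Wv ω)))
      (fun p => ((p.1, p.2.1), p.2.2))
      (by rintro ⟨a, b, c⟩ ⟨a', b', c'⟩ h; simpa [Prod.ext_iff, and_assoc] using h) :
      entropyOf μ (fun ω => ((U ω, V ω), Wv ω))
        = entropyOf μ (fun ω => (U ω, (V ω, Wv ω))))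
  rw [h1]; ring

lemma condEntropyOf_comp_left {S' : Type*} [Fintype S] [Fintype S'] [Fintype T]
    (U : Ω → S) (V : Ω → T) (e : S → S') (he : Function.Injective e) :
    condEntropyOf μ (fun ω => e (U ω)) V = condEntropyOf μ U V := by
  unfold condEntropyOf
  have h1 : entropyOf μ (fun ω => (e (U ω), V ω)) = entropyOf μ (fun ω => (U ω, V ω)) :=
    (entropyOf_comp_injective μ (fun ω => (U ω, V ω)) (fun p => (e p.1, p.2))
      (fun p q h => by
        simp only [Prod.ext_iff] at h ⊢; exact ⟨he h.1, h.2⟩) :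
      entropyOf μ (fun ω => (e (U ω), V ω)) = entropyOf μ (fun ω => (U ω, V ω)))
  rw [h1]

lemma condEntropyOf_comp_right {T' : Type*} [Fintype S] [Fintype T] [Fintype T']
    (U : Ω → S) (V : Ω → T) (e : T → T') (he : Function.Injective e) :
    condEntropyOf μ U (fun ω => e (V ω)) = condEntropyOf μ U V := by
  unfold condEntropyOf
  have h1 : entropyOf μ (fun ω => (U ω, e (V ω))) = entropyOf μ (fun ω => (U ω, V ω)) :=
    (entropyOf_comp_injective μ (fun ω => (U ω, V ω)) (fun p => (p.1, e p.2))
      (fun p q h => by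
        simp only [Prod.ext_iff] at h ⊢; exact ⟨h.1, he h.2⟩) :
      entropyOf μ (fun ω => (U ω, e (V ω))) = entropyOf μ (fun ω => (U ω, V ω)))
  have h2 : entropyOf μ (fun ω => e (V ω)) = entropyOf μ V :=
    entropyOf_comp_injective μ V e he
  rw [h1, h2]

lemma condEntropyOf_unique_left {S' : Type*} [Fintype S'] [Unique S'] [Fintype T]
    (U : Ω → S') (V : Ω → T) : condEntropyOf μ U V = 0 := by
  unfold condEntropyOf
  have h1 : entropyOf μ (fun ω => (U ω, V ω)) = entropyOf μ V := by
    have hf : (fun ω => (U ω, V ω)) = fun ω => ((default : S'), V ω) := by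
      funext ω; exact Prod.ext (Subsingleton.elim _ _) rfl
    rw [hf]
    exact entropyOf_comp_injective μ V (fun t => ((default : S'), t))
      (fun a b h => by simpa [Prod.ext_iff] using h)
  rw [h1]; ring

lemma condEntropyOf_unique_right {T' : Type*} [Fintype S] [Fintype T'] [Unique T']
    (U : Ω → S) (V : Ω → T') : condEntropyOf μ U V = entropyOf μ U := by
  unfold condEntropyOf
  have h1 : entropyOf μ (fun ω => (U ω, V ω)) = entropyOf μ U := by
    have hf : (fun ω => (U ω, V ω)) = fun ω => (U ω, (default : T')) := by
      funext ω; exact Prod.ext rfl (Subsingleton.elim _ _)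
    rw [hf]
    exact entropyOf_comp_injective μ U (fun s => (s, (default : T')))
      (fun a b h => by simpa [Prod.ext_iff] using h)
  rw [h1, entropyOf_unique μ V]; ring

lemma condEntropyOf_pair_unique_right {T₂ : Type*} [Fintype S] [Fintype T] [Fintype T₂]
    [Unique T₂] (U : Ω → S) (V : Ω → T) (V₂ : Ω → T₂) :
    condEntropyOf μ U (fun ω => (V ω, V₂ ω)) = condEntropyOf μ U V := by
  have hf : (fun ω => (V ω, V₂ ω)) = fun ω => (V ω, (default : T₂)) := by
    funext ω; exact Prod.ext rfl (Subsingleton.elim _ _)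
  rw [hf]
  exact condEntropyOf_comp_right μ U V (fun t => (t, (default : T₂)))
    (fun a b h => by simpa [Prod.ext_iff] using h)

end Stmt8Aux

namespace Stmt8Aux
open Finset
set_option linter.unusedSectionVars false
variable {Ω : Type*} [MeasurableSpace Ω] {S T W : Type*}
variable (μ : Measure Ω) [IsProbabilityMeasure μ]

lemma negMulLog_decomp [Fintype S] (p : S → ℝ) (q : ℝ) (hp : ∀ s, 0 ≤ p s)
    (hq : ∑ s : S, p s = q) :
    (∑ s : S, negMulLog (p s)) - negMulLog q = q * ∑ s : S, negMulLog (p s / q) := by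
  classical
  have hq0 : 0 ≤ q := hq ▸ Finset.sum_nonneg fun s _ => hp s
  rcases eq_or_lt_of_le hq0 with h0 | hpos
  · have hz : ∀ s ∈ Finset.univ, p s = 0 :=
      (Finset.sum_eq_zero_iff_of_nonneg (fun s _ => hp s)).1 (hq.trans h0.symm)
    have hz' : ∀ s : S, p s = 0 := fun s => hz s (Finset.mem_univ s)
    simp [hz', ← h0]
  · have hqne : q ≠ 0 := ne_of_gt hpos
    have key : ∀ s : S, q * negMulLog (p s / q) = negMulLog (p s) + p s * Real.log q := by
      intro s
      rcases eq_or_lt_of_le (hp s) with h | h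
      · simp [← h]
      · rw [negMulLog, negMulLog, Real.log_div (ne_of_gt h) hqne]
        field_simp; ring
    rw [Finset.mul_sum, Finset.sum_congr rfl (fun s _ => key s), Finset.sum_add_distrib,
      ← Finset.sum_mul, hq, negMulLog]
    ring

lemma condEntropyOf_eq_sum [Fintype S] [Fintype T] {U : Ω → S} {V : Ω → T}
    (h : Mble (fun ω => (U ω, V ω))) :
    condEntropyOf μ U V = ∑ t : T, (μ (V ⁻¹' {t})).toReal *
      ∑ s : S, negMulLog
        ((μ ((fun ω => (U ω, V ω)) ⁻¹' {(s, t)})).toReal / (μ (V ⁻¹' {t})).toReal) := by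
  unfold condEntropyOf entropyOf
  rw [Fintype.sum_prod_type_right, ← Finset.sum_sub_distrib]
  exact Finset.sum_congr rfl fun t _ =>
    negMulLog_decomp (fun s => (μ ((fun ω => (U ω, V ω)) ⁻¹' {(s, t)})).toReal)
      ((μ (V ⁻¹' {t})).toReal) (fun s => pm_nonneg μ _ _) (sum_pm_pair_left μ h t)

lemma condEntropyOf_nonneg [Fintype S] [Fintype T] {U : Ω → S} {V : Ω → T}
    (h : Mble (fun ω => (U ω, V ω))) :
    0 ≤ condEntropyOf μ U V := by
  rw [condEntropyOf_eq_sum μ h]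
  refine Finset.sum_nonneg fun t _ => mul_nonneg (pm_nonneg μ _ _)
    (Finset.sum_nonneg fun s _ => ?_)
  refine negMulLog_nonneg (div_nonneg (pm_nonneg μ _ _) (pm_nonneg μ _ _)) ?_
  refine div_le_one_of_le₀ ?_ (pm_nonneg μ _ _)
  exact pm_mono μ (fun ω hω => by
    simp only [Set.mem_preimage, Set.mem_singleton_iff] at hω ⊢
    rw [show V ω = ((U ω, V ω)).2 from rfl, hω])

lemma jensen_step [DecidableEq T] (F : Finset T) (Pt : T → ℝ) (Ps : T → ℝ)
    (hPt : ∀ t, 0 ≤ Pt t) (hPs : ∀ t, 0 ≤ Ps t) (hle : ∀ t, Ps t ≤ Pt t) :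
    ∑ t ∈ F, Pt t * negMulLog (Ps t / Pt t)
      ≤ (∑ t ∈ F, Pt t) * negMulLog ((∑ t ∈ F, Ps t) / (∑ t ∈ F, Pt t)) := by
  set q := ∑ t ∈ F, Pt t with hqdef
  have hq0 : 0 ≤ q := Finset.sum_nonneg fun t _ => hPt t
  rcases eq_or_lt_of_le hq0 with h0 | hpos
  · have hz : ∀ t ∈ F, Pt t = 0 :=
      (Finset.sum_eq_zero_iff_of_nonneg (fun t _ => hPt t)).1 h0.symm
    have : ∑ t ∈ F, Pt t * negMulLog (Ps t / Pt t) = 0 :=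
      Finset.sum_eq_zero fun t ht => by rw [hz t ht]; ring
    rw [this, ← h0]; ring_nf; exact le_refl _
  · have hqne : q ≠ 0 := ne_of_gt hpos
    have jensen := concaveOn_negMulLog.le_map_sum (t := F) (w := fun t => Pt t / q)
      (p := fun t => Ps t / Pt t)
      (fun t _ => div_nonneg (hPt t) hq0)
      (by rw [← Finset.sum_div, ← hqdef, div_self hqne])
      (fun t _ => Set.mem_Ici.2 (div_nonneg (hPs t) (hPt t)))
    have hpoint : ∀ t ∈ F, (Pt t / q) • (Ps t / Pt t) = Ps t / q := by
      intro t _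
      rcases eq_or_lt_of_le (hPt t) with h | h
      · have hps0 : Ps t = 0 := le_antisymm (h ▸ hle t) (hPs t)
        simp [← h, hps0]
      · rw [smul_eq_mul]; field_simp
    calc ∑ t ∈ F, Pt t * negMulLog (Ps t / Pt t)
        = q * ∑ t ∈ F, (Pt t / q) • negMulLog (Ps t / Pt t) := by
          rw [Finset.mul_sum]
          refine Finset.sum_congr rfl fun t _ => ?_
          rw [smul_eq_mul]; field_simp
      _ ≤ q * negMulLog (∑ t ∈ F, (Pt t / q) • (Ps t / Pt t)) :=
          mul_le_mul_of_nonneg_left jensen hq0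
      _ = q * negMulLog ((∑ t ∈ F, Ps t) / q) := by
          rw [Finset.sum_congr rfl hpoint, ← Finset.sum_div]
      _ = (∑ t ∈ F, Pt t) * negMulLog ((∑ t ∈ F, Ps t) / (∑ t ∈ F, Pt t)) := by
          rw [← hqdef]

/-- Conditioning on more information reduces entropy. -/
lemma condEntropyOf_comp_le {W' : Type*} [Fintype S] [Fintype T] [Fintype W']
    {U : Ω → S} {V : Ω → T} (hUV : Mble (fun ω => (U ω, V ω))) (hV : Mble V) (g : T → W') :
    condEntropyOf μ U V ≤ condEntropyOf μ U (fun ω => g (V ω)) := by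
  classical
  have hUgV : Mble (fun ω => (U ω, g (V ω))) :=
    hUV.comp (fun p => (p.1, g p.2))
  rw [condEntropyOf_eq_sum μ hUV, condEntropyOf_eq_sum μ hUgV]
  -- notation
  set P : S × T → ℝ := fun p => (μ ((fun ω => (U ω, V ω)) ⁻¹' {p})).toReal with hP
  set Pt : T → ℝ := fun t => (μ (V ⁻¹' {t})).toReal with hPt
  have hQ : ∀ w : W', (μ ((fun ω => g (V ω)) ⁻¹' {w})).toReal
      = ∑ t ∈ Finset.univ.filter (fun t => g t = w), Pt t := by
    intro w
    rw [toReal_measure_comp_preimage μ hV g w, Finset.sum_filter]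
  have hQs : ∀ (s : S) (w : W'), (μ ((fun ω => (U ω, g (V ω))) ⁻¹' {(s, w)})).toReal
      = ∑ t ∈ Finset.univ.filter (fun t => g t = w), P (s, t) := by
    intro s w
    have h1 : (μ ((fun ω => (U ω, g (V ω))) ⁻¹' {(s, w)})).toReal
        = ∑ p : S × T, if (p.1, g p.2) = (s, w) then P p else 0 :=
      toReal_measure_comp_preimage μ hUV (fun p : S × T => (p.1, g p.2)) (s, w)
    rw [h1, Fintype.sum_prod_type, Finset.sum_comm, Finset.sum_filter]
    refine Finset.sum_congr rfl fun t _ => ?_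
    simp [Prod.ext_iff, ite_and, Finset.sum_ite_eq, Finset.sum_ite_eq']
  -- group LHS by fibers of g
  have hdisjW : Set.PairwiseDisjoint (↑(Finset.univ : Finset W'))
      (fun w => Finset.univ.filter (fun t => g t = w)) := by
    intro w _ w' _ hww'
    simp only [Function.onFun, Finset.disjoint_left, Finset.mem_filter]
    rintro t ⟨_, h1⟩ ⟨_, h2⟩; exact hww' (h1 ▸ h2 ▸ rfl)
  have hgroup : ∑ t : T, Pt t * ∑ s : S, negMulLog (P (s, t) / Pt t)
      = ∑ w : W', ∑ t ∈ Finset.univ.filter (fun t => g t = w),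
          Pt t * ∑ s : S, negMulLog (P (s, t) / Pt t) := by
    rw [← Finset.sum_biUnion hdisjW]
    refine Finset.sum_congr ?_ fun _ _ => rfl
    ext t; simp
  rw [hgroup]

  refine Finset.sum_le_sum fun w _ => ?_
  simp only [hQ, hQs]
  rw [Finset.mul_sum]
  have hswap : ∑ t ∈ Finset.univ.filter (fun t => g t = w),
      Pt t * ∑ s : S, negMulLog (P (s, t) / Pt t)
      = ∑ s : S, ∑ t ∈ Finset.univ.filter (fun t => g t = w),
          Pt t * negMulLog (P (s, t) / Pt t) := by
    refine Eq.trans (Finset.sum_congr rfl fun t _ => Finset.mul_sum _ _ _) ?_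
    exact Finset.sum_comm
  rw [hswap]
  refine Finset.sum_le_sum fun s _ => ?_
  exact jensen_step _ Pt (fun t => P (s, t)) (fun t => pm_nonneg μ _ _)
    (fun t => pm_nonneg μ _ _)
    (fun t => pm_mono μ (fun ω hω => by
      simp only [Set.mem_preimage, Set.mem_singleton_iff] at hω ⊢
      rw [show V ω = ((U ω, V ω)).2 from rfl, hω]))

end Stmt8Aux

namespace Stmt8Aux
open Finset
set_option linter.unusedSectionVars false

variable {A B C : Type*} [Fintype A] [MeasurableSpace A] [MeasurableSingletonClass A]
  [Fintype B] {S T : Type*}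

section ShiftLemmas
variable {μ : Measure (ℤ → A)} [IsProbabilityMeasure μ]

lemma entropyOf_shift (hstat : MeasurePreserving shift μ μ) [Fintype S]
    {Z : (ℤ → A) → S} (hZ : Mble Z) :
    entropyOf μ (fun x => Z (shift x)) = entropyOf μ Z := by
  unfold entropyOf
  refine Finset.sum_congr rfl fun s _ => ?_
  congr 1
  have h : ((fun x => Z (shift x)) ⁻¹' {s} : Set (ℤ → A)) = shift ⁻¹' (Z ⁻¹' {s}) := rfl
  rw [h, hstat.measure_preimage (hZ s).nullMeasurableSet]

lemma condEntropyOf_shift (hstat : MeasurePreserving shift μ μ) [Fintype S] [Fintype T]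
    {U : (ℤ → A) → S} {V : (ℤ → A) → T}
    (hUV : Mble (fun x => (U x, V x))) (hV : Mble V) :
    condEntropyOf μ (fun x => U (shift x)) (fun x => V (shift x)) = condEntropyOf μ U V := by
  have h1 : entropyOf μ (fun x => (U (shift x), V (shift x)))
      = entropyOf μ (fun x => (U x, V x)) := entropyOf_shift (Z := fun x => (U x, V x)) hstat hUV
  have h2 : entropyOf μ (fun x => V (shift x)) = entropyOf μ V := entropyOf_shift hstat hV
  unfold condEntropyOf
  rw [h2]
  congr 1

end ShiftLemmas

/-- Block of `m` coordinates starting at `k`. -/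
def Xblk (A : Type*) (k : ℤ) (m : ℕ) : (ℤ → A) → (Fin m → A) := fun x j => x (k + (j : ℕ))

/-- Block of `n` observed coordinates starting at `k`. -/
def Yblk {A B : Type*} (φ : A → B) (k : ℤ) (n : ℕ) : (ℤ → A) → (Fin n → B) :=
  fun x i => φ (x (k + (i : ℕ)))

lemma mble_coord (i : ℤ) (f : A → S) : Mble (fun x : ℤ → A => f (x i)) := by
  intro s
  have h : ((fun x : ℤ → A => f (x i)) ⁻¹' {s}) = (fun x : ℤ → A => x i) ⁻¹' (f ⁻¹' {s}) := rfl
  rw [h]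
  exact (measurable_pi_apply i) ((Set.toFinite (f ⁻¹' {s})).measurableSet)

lemma mble_Xblk (k : ℤ) (m : ℕ) : Mble (Xblk A k m) := by
  intro v
  have h : Xblk A k m ⁻¹' {v} = ⋂ j : Fin m, (fun x : ℤ → A => x (k + (j : ℕ))) ⁻¹' {v j} := by
    ext x; simp [Xblk, funext_iff]
  rw [h]
  exact MeasurableSet.iInter fun j => (measurable_pi_apply _) (measurableSet_singleton _)

lemma mble_Yblk (φ : A → B) (k : ℤ) (n : ℕ) : Mble (Yblk φ k n) :=
  (mble_Xblk k n).comp (fun v (i : Fin n) => φ (v i))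

end Stmt8Aux

namespace Stmt8Aux
open Finset
set_option linter.unusedSectionVars false

variable {A B : Type*} [Fintype A] [MeasurableSpace A] [MeasurableSingletonClass A] [Fintype B]

lemma Yblk_zero_succ (φ : A → B) (n : ℕ) :
    Yblk φ 0 (n + 1) = fun x => Fin.cons (φ (x 0)) (Yblk φ 1 n x) := by
  funext x i
  induction i using Fin.cases with
  | zero => simp [Yblk]
  | succ j =>
    simp only [Yblk, Fin.cons_succ]
    congr 1
    congr 1
    simp only [Fin.val_succ]
    push_cast
    ring

lemma Xblk_zero_succ (n : ℕ) :
    Xblk A 0 (n + 1) = fun x => Fin.cons (x 0) (Xblk A 1 n x) := by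
  funext x i
  induction i using Fin.cases with
  | zero => simp [Xblk]
  | succ j =>
    simp only [Xblk, Fin.cons_succ]
    congr 1
    simp only [Fin.val_succ]
    push_cast
    ring

lemma Xblk_shift (k : ℤ) (M : ℕ) : Xblk A (k + 1) M = fun x => Xblk A k M (shift x) := by
  funext x j
  simp only [Xblk, shift]
  congr 1
  ring

lemma Yblk_shift (φ : A → B) (k : ℤ) (n : ℕ) :
    Yblk φ (k + 1) n = fun x => Yblk φ k n (shift x) := by
  funext x i
  simp only [Yblk, shift]
  congr 1
  congr 1
  ring

lemma Xblk_one_shift (n : ℕ) : Xblk A 1 n = fun x => Xblk A 0 n (shift x) := by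
  rw [show (1 : ℤ) = 0 + 1 by ring, Xblk_shift]

lemma Yblk_one_shift (φ : A → B) (n : ℕ) :
    Yblk φ 1 n = fun x => Yblk φ 0 n (shift x) := by
  rw [show (1 : ℤ) = 0 + 1 by ring, Yblk_shift]

lemma Xblk_append (n M : ℕ) :
    Xblk A 1 (n + M) = fun x => Fin.append (Xblk A 1 n x) (Xblk A ((n : ℤ) + 1) M x) := by
  funext x i
  refine Fin.addCases (fun j => ?_) (fun j => ?_) i
  · simp [Fin.append_left, Xblk]
  · simp only [Fin.append_right, Xblk, Fin.coe_natAdd]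
    congr 1
    push_cast
    ring

lemma cons_pair_injective {n : ℕ} {C : Type*} :
    Function.Injective (fun p : C × (Fin n → C) => (Fin.cons p.1 p.2 : Fin (n+1) → C)) := by
  rintro ⟨a, u⟩ ⟨b, v⟩ h
  have h2 := Fin.cons_injective2 (α := fun _ : Fin (n+1) => C) h
  exact Prod.ext h2.1 h2.2

lemma append_pair_injective {n M : ℕ} {C : Type*} :
    Function.Injective (fun p : (Fin n → C) × (Fin M → C) => Fin.append p.1 p.2) := by
  rintro ⟨u, v⟩ ⟨u', v'⟩ h
  refine Prod.ext ?_ ?_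
  · funext j
    have := congrFun h (Fin.castAdd M j)
    simpa [Fin.append_left] using this
  · funext j
    have := congrFun h (Fin.natAdd n j)
    simpa [Fin.append_right] using this

variable (μ : Measure (ℤ → A)) [IsProbabilityMeasure μ] (φ : A → B)

/-- `H(Y₀ ∣ Y₁ … Yₙ)`. -/
noncomputable def cE (n : ℕ) : ℝ :=
  condEntropyOf μ (fun x : ℤ → A => φ (x 0)) (Yblk φ 1 n)

/-- `H(X₀ ∣ X₁ … Xₙ)`. -/
noncomputable def eE (n : ℕ) : ℝ :=
  condEntropyOf μ (fun x : ℤ → A => x 0) (Xblk A 1 n)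

/-- `H(Y₀ ∣ Y₁ … Yₙ, X_{n+1} … X_{n+m})`. -/
noncomputable def dE (n m : ℕ) : ℝ :=
  condEntropyOf μ (fun x : ℤ → A => φ (x 0))
    (fun x => (Yblk φ 1 n x, Xblk A ((n : ℤ) + 1) m x))

lemma G_sum (hstat : MeasurePreserving shift μ μ) (M : ℕ) :
    ∀ n : ℕ, condEntropyOf μ (Xblk A 0 n) (Xblk A (n : ℤ) M)
      = ∑ j ∈ Finset.range n, eE μ (j + M) := by
  intro n
  induction n with
  | zero => simpa using condEntropyOf_unique_left μ (Xblk A 0 0) (Xblk A ((0 : ℕ) : ℤ) M)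
  | succ n ih =>
    have hcast : ((n + 1 : ℕ) : ℤ) = (n : ℤ) + 1 := by push_cast; ring
    calc condEntropyOf μ (Xblk A 0 (n + 1)) (Xblk A ((n + 1 : ℕ) : ℤ) M)
        = condEntropyOf μ (fun x => (Fin.cons (x 0) (Xblk A 1 n x) : Fin (n+1) → A))
            (Xblk A ((n : ℤ) + 1) M) := by rw [hcast, Xblk_zero_succ]
      _ = condEntropyOf μ (fun x : ℤ → A => (x 0, Xblk A 1 n x)) (Xblk A ((n : ℤ) + 1) M) :=
          condEntropyOf_comp_left μ (fun x : ℤ → A => (x 0, Xblk A 1 n x))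
            (Xblk A ((n : ℤ) + 1) M) (fun p : A × (Fin n → A) => (Fin.cons p.1 p.2 : Fin (n+1) → A)) cons_pair_injective
      _ = condEntropyOf μ (fun x : ℤ → A => x 0)
            (fun x => (Xblk A 1 n x, Xblk A ((n : ℤ) + 1) M x))
          + condEntropyOf μ (Xblk A 1 n) (Xblk A ((n : ℤ) + 1) M) :=
          chainRule μ (fun x : ℤ → A => x 0) (Xblk A 1 n) (Xblk A ((n : ℤ) + 1) M)
      _ = eE μ (n + M) + ∑ j ∈ Finset.range n, eE μ (j + M) := by
          congr 1
          · have hmerge := condEntropyOf_comp_right μ (fun x : ℤ → A => x 0)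
              (fun x => (Xblk A 1 n x, Xblk A ((n : ℤ) + 1) M x))
              (fun p : (Fin n → A) × (Fin M → A) => Fin.append p.1 p.2) append_pair_injective
            rw [eE, Xblk_append n M]
            exact hmerge.symm
          · rw [Xblk_one_shift, Xblk_shift (n : ℤ) M]
            exact (condEntropyOf_shift (U := Xblk A 0 n) (V := Xblk A (n : ℤ) M) hstat
              ((mble_Xblk 0 n).pair (mble_Xblk (n : ℤ) M)) (mble_Xblk (n : ℤ) M)).trans ih
      _ = ∑ j ∈ Finset.range (n + 1), eE μ (j + M) := by
          rw [Finset.sum_range_succ]; ring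

lemma F_sum (hstat : MeasurePreserving shift μ μ) (M : ℕ) :
    ∀ n : ℕ, condEntropyOf μ (Yblk φ 0 n) (Xblk A (n : ℤ) M)
      = ∑ j ∈ Finset.range n, dE μ φ j M := by
  intro n
  induction n with
  | zero => simpa using condEntropyOf_unique_left μ (Yblk φ 0 0) (Xblk A ((0 : ℕ) : ℤ) M)
  | succ n ih =>
    have hcast : ((n + 1 : ℕ) : ℤ) = (n : ℤ) + 1 := by push_cast; ring
    calc condEntropyOf μ (Yblk φ 0 (n + 1)) (Xblk A ((n + 1 : ℕ) : ℤ) M)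
        = condEntropyOf μ (fun x => (Fin.cons (φ (x 0)) (Yblk φ 1 n x) : Fin (n+1) → B))
            (Xblk A ((n : ℤ) + 1) M) := by rw [hcast, Yblk_zero_succ]
      _ = condEntropyOf μ (fun x : ℤ → A => (φ (x 0), Yblk φ 1 n x))
            (Xblk A ((n : ℤ) + 1) M) :=
          condEntropyOf_comp_left μ (fun x : ℤ → A => (φ (x 0), Yblk φ 1 n x))
            (Xblk A ((n : ℤ) + 1) M) (fun p : B × (Fin n → B) => (Fin.cons p.1 p.2 : Fin (n+1) → B)) cons_pair_injective
      _ = condEntropyOf μ (fun x : ℤ → A => φ (x 0))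
            (fun x => (Yblk φ 1 n x, Xblk A ((n : ℤ) + 1) M x))
          + condEntropyOf μ (Yblk φ 1 n) (Xblk A ((n : ℤ) + 1) M) :=
          chainRule μ (fun x : ℤ → A => φ (x 0)) (Yblk φ 1 n) (Xblk A ((n : ℤ) + 1) M)
      _ = dE μ φ n M + ∑ j ∈ Finset.range n, dE μ φ j M := by
          congr 1
          rw [Yblk_one_shift, Xblk_shift (n : ℤ) M]
          exact (condEntropyOf_shift (U := Yblk φ 0 n) (V := Xblk A (n : ℤ) M) hstat
            ((mble_Yblk φ 0 n).pair (mble_Xblk (n : ℤ) M)) (mble_Xblk (n : ℤ) M)).trans ih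
      _ = ∑ j ∈ Finset.range (n + 1), dE μ φ j M := by
          rw [Finset.sum_range_succ]; ring

end Stmt8Aux

namespace Stmt8Aux
open Finset
set_option linter.unusedSectionVars false

variable {A B : Type*} [Fintype A] [MeasurableSpace A] [MeasurableSingletonClass A] [Fintype B]
variable (μ : Measure (ℤ → A)) [IsProbabilityMeasure μ] (φ : A → B)

lemma cE_nonneg (n : ℕ) : 0 ≤ cE μ φ n :=
  condEntropyOf_nonneg μ ((mble_coord 0 φ).pair (mble_Yblk φ 1 n))

lemma eE_nonneg (n : ℕ) : 0 ≤ eE μ n :=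
  condEntropyOf_nonneg μ
    (((mble_coord (0 : ℤ) (fun a : A => a)) : Mble (fun x : ℤ → A => x 0)).pair
      (mble_Xblk 1 n))

lemma cE_antitone : Antitone (cE μ φ) := by
  refine antitone_nat_of_succ_le fun n => ?_
  have hfun : (fun x => (fun (v : Fin (n+1) → B) (i : Fin n) => v i.castSucc)
        (Yblk φ 1 (n+1) x)) = Yblk φ 1 n := by
    funext x i
    simp [Yblk]
  have h := condEntropyOf_comp_le μ (U := fun x : ℤ → A => φ (x 0)) (V := Yblk φ 1 (n+1))
    ((mble_coord 0 φ).pair (mble_Yblk φ 1 (n+1))) (mble_Yblk φ 1 (n+1))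
    (fun (v : Fin (n+1) → B) (i : Fin n) => v i.castSucc)
  rw [hfun] at h
  exact h

lemma eE_antitone : Antitone (eE μ (A := A)) := by
  refine antitone_nat_of_succ_le fun n => ?_
  have hfun : (fun x => (fun (v : Fin (n+1) → A) (i : Fin n) => v i.castSucc)
        (Xblk A 1 (n+1) x)) = Xblk A 1 n := by
    funext x i
    simp [Xblk]
  have h := condEntropyOf_comp_le μ (U := fun x : ℤ → A => x 0) (V := Xblk A 1 (n+1))
    (((mble_coord (0 : ℤ) (fun a : A => a)) : Mble (fun x : ℤ → A => x 0)).pair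
      (mble_Xblk 1 (n+1))) (mble_Xblk 1 (n+1))
    (fun (v : Fin (n+1) → A) (i : Fin n) => v i.castSucc)
  rw [hfun] at h
  exact h

lemma dE_le_cE (n m : ℕ) : dE μ φ n m ≤ cE μ φ n := by
  have h := condEntropyOf_comp_le μ (U := fun x : ℤ → A => φ (x 0))
    (V := fun x => (Yblk φ 1 n x, Xblk A ((n : ℤ) + 1) m x))
    ((mble_coord 0 φ).pair ((mble_Yblk φ 1 n).pair (mble_Xblk ((n : ℤ) + 1) m)))
    ((mble_Yblk φ 1 n).pair (mble_Xblk ((n : ℤ) + 1) m)) Prod.fst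
  exact h

lemma dE_mono_step (n m : ℕ) : dE μ φ n (m + 1) ≤ dE μ φ (n + 1) m := by
  have hfun : (fun x => (fun (p : (Fin n → B) × (Fin (m+1) → A)) =>
        ((Fin.snoc p.1 (φ (p.2 0)) : Fin (n+1) → B), fun j : Fin m => p.2 j.succ))
        ((Yblk φ 1 n x, Xblk A ((n : ℤ) + 1) (m+1) x)))
      = fun x => (Yblk φ 1 (n+1) x, Xblk A (((n+1 : ℕ) : ℤ) + 1) m x) := by
    funext x
    refine Prod.ext ?_ ?_
    · funext i
      refine Fin.lastCases ?_ (fun i => ?_) i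
      · simp only [Fin.snoc_last, Yblk, Xblk, Fin.val_last, Fin.val_zero]
        congr 1
        congr 1
        push_cast
        ring
      · simp only [Fin.snoc_castSucc, Yblk, Fin.coe_castSucc]
    · funext j
      simp only [Xblk, Fin.val_succ]
      congr 1
      push_cast
      ring
  have h := condEntropyOf_comp_le μ (U := fun x : ℤ → A => φ (x 0))
    (V := fun x => (Yblk φ 1 n x, Xblk A ((n : ℤ) + 1) (m+1) x))
    ((mble_coord 0 φ).pair ((mble_Yblk φ 1 n).pair (mble_Xblk ((n : ℤ) + 1) (m+1))))
    ((mble_Yblk φ 1 n).pair (mble_Xblk ((n : ℤ) + 1) (m+1)))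
    (fun (p : (Fin n → B) × (Fin (m+1) → A)) =>
      ((Fin.snoc p.1 (φ (p.2 0)) : Fin (n+1) → B), fun j : Fin m => p.2 j.succ))
  rw [hfun] at h
  unfold dE
  exact h

lemma HY_eq (hstat : MeasurePreserving shift μ μ) (n : ℕ) :
    entropyOf μ (Yblk φ 0 n) = ∑ j ∈ Finset.range n, cE μ φ j := by
  have h0 := F_sum μ φ hstat 0 n
  have h1 : condEntropyOf μ (Yblk φ 0 n) (Xblk A (n : ℤ) 0) = entropyOf μ (Yblk φ 0 n) :=
    condEntropyOf_unique_right μ _ _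
  rw [← h1, h0]
  refine Finset.sum_congr rfl fun j _ => ?_
  exact condEntropyOf_pair_unique_right μ (fun x : ℤ → A => φ (x 0)) (Yblk φ 1 j)
    (Xblk A ((j : ℤ) + 1) 0)

lemma HX_eq (hstat : MeasurePreserving shift μ μ) (n : ℕ) :
    entropyOf μ (Xblk A 0 n) = ∑ j ∈ Finset.range n, eE μ j := by
  have h0 := G_sum μ hstat 0 n
  have h1 : condEntropyOf μ (Xblk A 0 n) (Xblk A (n : ℤ) 0) = entropyOf μ (Xblk A 0 n) :=
    condEntropyOf_unique_right μ _ _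
  rw [← h1, h0]
  simp

lemma cond_swap {S T : Type*} [Fintype S] [Fintype T] (U : (ℤ → A) → S) (V : (ℤ → A) → T) :
    condEntropyOf μ U V + entropyOf μ V = condEntropyOf μ V U + entropyOf μ U := by
  unfold condEntropyOf
  rw [entropyOf_pair_swap μ U V]
  ring

lemma master_ineq (hstat : MeasurePreserving shift μ μ) (n M : ℕ) :
    ∑ j ∈ Finset.range n, cE μ φ j - ∑ j ∈ Finset.range n, eE μ j
      + ∑ j ∈ Finset.range n, eE μ (j + M) ≤ ∑ j ∈ Finset.range n, dE μ φ j M := by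
  have hF := F_sum μ φ hstat M n
  have hG := G_sum μ hstat M n
  have hHY := HY_eq μ φ hstat n
  have hHX := HX_eq μ hstat n
  -- data processing: H(T | X-block) ≤ H(T | Y-block)
  have hdp : condEntropyOf μ (Xblk A (n : ℤ) M) (Xblk A 0 n)
      ≤ condEntropyOf μ (Xblk A (n : ℤ) M) (Yblk φ 0 n) := by
    have h := condEntropyOf_comp_le μ (U := Xblk A (n : ℤ) M) (V := Xblk A 0 n)
      ((mble_Xblk (n : ℤ) M).pair (mble_Xblk 0 n)) (mble_Xblk 0 n)
      (fun (v : Fin n → A) (i : Fin n) => φ (v i))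
    exact h
  have hsw1 := cond_swap μ (Xblk A (n : ℤ) M) (Xblk A 0 n)
  have hsw2 := cond_swap μ (Xblk A (n : ℤ) M) (Yblk φ 0 n)
  linarith
end Stmt8Aux

open Stmt8Aux in
theorem stmt8_helper {A B : Type*} [Fintype A] [MeasurableSpace A] [MeasurableSingletonClass A]
    [Fintype B]
    (μ : Measure (ℤ → A)) [IsProbabilityMeasure μ]
    (hstat : MeasurePreserving shift μ μ)
    (φ : A → B) (entRate : ℝ)
    (hrate : Tendsto
      (fun n : ℕ => entropyOf μ (fun x => fun i : Fin n => φ (x ((i : ℕ) : ℤ))) / n)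
      atTop (nhds entRate))
    (d : ℕ → ℕ → ℝ)
    (hd : ∀ n m : ℕ, d n m = condEntropyOf μ (fun x => φ (x 0))
        (fun x => ((fun i : Fin n => φ (x (((i : ℕ) : ℤ) + 1))),
                   (fun j : Fin m => x ((n : ℤ) + 1 + (j : ℕ))))))
    (D : ℕ → ℝ)
    (hD : ∀ n : ℕ, Tendsto (fun m : ℕ => d n m) atTop (nhds (D n))) :
    Tendsto D atTop (nhds entRate) := by
  classical
  have hd' : ∀ n m, d n m = dE μ φ n m := by
    intro n m
    rw [hd n m]
    unfold dE
    congr 1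
    funext x
    refine Prod.ext ?_ ?_
    · funext i
      simp only [Yblk]
      congr 1
      congr 1
      ring
    · funext j
      simp only [Xblk]
  -- the limit of H(Y₀ ∣ Y₁ … Yₙ)
  have hcbdd : BddBelow (Set.range (cE μ φ)) :=
    ⟨0, by rintro _ ⟨n, rfl⟩; exact cE_nonneg μ φ n⟩
  have hclim : Tendsto (cE μ φ) atTop (nhds (⨅ n, cE μ φ n)) :=
    tendsto_atTop_ciInf (cE_antitone μ φ) hcbdd
  set C := ⨅ n, cE μ φ n with hCdef
  -- identify entRate with C
  have hYfun : ∀ n : ℕ, entropyOf μ (fun x => fun i : Fin n => φ (x ((i : ℕ) : ℤ)))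
      = entropyOf μ (Yblk φ 0 n) := by
    intro n
    congr 1
    funext x i
    simp [Yblk]
  have hrate2 : Tendsto (fun n : ℕ => ((n : ℝ))⁻¹ * ∑ j ∈ Finset.range n, cE μ φ j)
      atTop (nhds entRate) := by
    refine hrate.congr fun n => ?_
    rw [hYfun n, HY_eq μ φ hstat n, div_eq_inv_mul]
  have hC : entRate = C := tendsto_nhds_unique hrate2 hclim.cesaro
  -- the limit of H(X₀ ∣ X₁ … Xₙ)
  have hebdd : BddBelow (Set.range (eE μ (A := A))) :=
    ⟨0, by rintro _ ⟨n, rfl⟩; exact eE_nonneg μ n⟩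
  have helim : Tendsto (eE μ (A := A)) atTop (nhds (⨅ n, eE μ n)) :=
    tendsto_atTop_ciInf (eE_antitone μ) hebdd
  set E := ⨅ n, eE μ (A := A) n with hEdef
  -- D is monotone and bounded above
  have hdmono : Monotone D := by
    refine monotone_nat_of_le_succ fun n => ?_
    refine le_of_tendsto_of_tendsto' ((hD n).comp (tendsto_add_atTop_nat 1)) (hD (n+1))
      (fun m => ?_)
    have h1 : d n (m + 1) ≤ d (n + 1) m := by
      rw [hd', hd']
      exact dE_mono_step μ φ n m
    exact h1
  have hDleC : ∀ n, D n ≤ cE μ φ n := by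
    intro n
    refine le_of_tendsto' (hD n) fun m => ?_
    rw [hd']
    exact dE_le_cE μ φ n m
  have hDbdd : BddAbove (Set.range D) := by
    refine ⟨cE μ φ 0, ?_⟩
    rintro _ ⟨n, rfl⟩
    exact (hDleC n).trans (cE_antitone μ φ (Nat.zero_le n))
  have hDlim : Tendsto D atTop (nhds (⨆ n, D n)) := tendsto_atTop_ciSup hdmono hDbdd
  set L := ⨆ n, D n with hLdef
  have hLle : L ≤ C := le_of_tendsto_of_tendsto' hDlim hclim hDleC
  -- lower bound via the master inequality
  have hlow : ∀ n, ∑ j ∈ Finset.range n, (cE μ φ j - eE μ j + E)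
      ≤ ∑ j ∈ Finset.range n, D j := by
    intro n
    have hsplit : ∑ j ∈ Finset.range n, (cE μ φ j - eE μ j + E)
        = ∑ j ∈ Finset.range n, cE μ φ j - ∑ j ∈ Finset.range n, eE μ j
          + ∑ j ∈ Finset.range n, E := by
      rw [Finset.sum_add_distrib, Finset.sum_sub_distrib]
    rw [hsplit]
    have hLtend : Tendsto (fun m => ∑ j ∈ Finset.range n, d j (m+1)) atTop
        (nhds (∑ j ∈ Finset.range n, D j)) :=
      tendsto_finset_sum _ (fun j _ => (hD j).comp (tendsto_add_atTop_nat 1))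
    have hRtend : Tendsto (fun m => ∑ j ∈ Finset.range n, cE μ φ j
        - ∑ j ∈ Finset.range n, eE μ j + ∑ j ∈ Finset.range n, eE μ (j + (m+1))) atTop
        (nhds (∑ j ∈ Finset.range n, cE μ φ j - ∑ j ∈ Finset.range n, eE μ j
          + ∑ j ∈ Finset.range n, E)) := by
      refine tendsto_const_nhds.add (tendsto_finset_sum _ fun j _ => ?_)
      have hj : (fun m : ℕ => eE μ (A := A) (j + (m + 1)))
          = (fun m => eE μ (A := A) (m + (j + 1))) := by
        funext m
        congr 1
        omega
      rw [hj]
      exact helim.comp (tendsto_add_atTop_nat (j+1))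
    refine le_of_tendsto_of_tendsto' hRtend hLtend fun m => ?_
    have hmaster := master_ineq μ φ hstat n (m+1)
    have hsum : ∑ j ∈ Finset.range n, d j (m+1) = ∑ j ∈ Finset.range n, dE μ φ j (m+1) :=
      Finset.sum_congr rfl fun j _ => hd' j (m+1)
    rw [hsum]
    exact hmaster
  have hu : Tendsto (fun j => cE μ φ j - eE μ (A := A) j + E) atTop (nhds (C - E + E)) :=
    (hclim.sub helim).add tendsto_const_nhds
  have hge : C - E + E ≤ L := by
    refine le_of_tendsto_of_tendsto' hu.cesaro hDlim.cesaro fun n => ?_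
    exact mul_le_mul_of_nonneg_left (hlow n) (by positivity)
  have hCleL : C ≤ L := by
    have : C - E + E = C := by ring
    rwa [this] at hge
  have hfin : L = entRate := by
    rw [hC]
    exact le_antisymm hLle hCleL
  rw [← hfin]
  exact hDlim


/-- Let `X` be a stationary ergodic process with continuous conditional
probabilities: the oscillation `r_n` of the conditional probability of `X_0` given a window
`X_1, …, X_n` over all continuations tends to `0`. Let `Y_n = φ(X_n)` and
`D_n = lim_m H(Y_0 | Y_1, …, Y_n, X_{n+1}, …, X_{n+m})`. Then `D_n → h(𝑌)` as `n → ∞`. -/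
theorem stmt8 {A B : Type*} [Fintype A] [MeasurableSpace A] [MeasurableSingletonClass A]
    [Fintype B]
    (μ : Measure (ℤ → A)) [IsProbabilityMeasure μ]
    (hstat : MeasurePreserving shift μ μ) (herg : Ergodic shift μ)
    (φ : A → B) (entRate : ℝ)
    (hrate : Tendsto
      (fun n : ℕ => entropyOf μ (fun x => fun i : Fin n => φ (x ((i : ℕ) : ℤ))) / n)
      atTop (nhds entRate))
    (r : ℕ → ℝ) (hr : Tendsto r atTop (nhds 0))
    (hcont : ∀ (n : ℕ) (w : ℕ → A) (m₁ : ℕ) (u : ℕ → A) (m₂ : ℕ) (v : ℕ → A) (a : A),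
      |finiteWindowCondProb μ a n w m₁ u - finiteWindowCondProb μ a n w m₂ v| ≤ r n)
    (d : ℕ → ℕ → ℝ)
    (hd : ∀ n m : ℕ, d n m = condEntropyOf μ (fun x => φ (x 0))
        (fun x => ((fun i : Fin n => φ (x (((i : ℕ) : ℤ) + 1))),
                   (fun j : Fin m => x ((n : ℤ) + 1 + (j : ℕ))))))
    (D : ℕ → ℝ)
    (hD : ∀ n : ℕ, Tendsto (fun m : ℕ => d n m) atTop (nhds (D n))) :
    Tendsto D atTop (nhds entRate) :=
  stmt8_helper μ hstat φ entRate hrate d hd D hD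
end

section
/- For the bit-shift channel: if y = φ(x, ω) and y_n = d − 2 for some n, then y_{n+1} ≥ d. In particular the word (d − 2, d − 2) does not occur in any output sequence y ∈ O. -/
/-- For the bit-shift channel: if `y = φ(x, ω)` and `y_n = d − 2` for some
`n`, then `y_{n+1} ≥ d`. In particular the word `(d − 2, d − 2)` does not occur in any output
sequence. -/
theorem stmt12 (d k : ℤ) (hd : 2 ≤ d) (hdk : d < k)
    (x : ℤ → ℤ) (hx : ∀ n : ℤ, d ≤ x n ∧ x n ≤ k)
    (ω : ℤ → ℤ × ℤ)
    (hω1 : ∀ n : ℤ, (ω n).1 = -1 ∨ (ω n).1 = 0 ∨ (ω n).1 = 1)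
    (hω2 : ∀ n : ℤ, (ω n).2 = -1 ∨ (ω n).2 = 0 ∨ (ω n).2 = 1)
    (hchain : ∀ n : ℤ, (ω n).2 = (ω (n + 1)).1)
    (y : ℤ → ℤ) (hy : ∀ n : ℤ, y n = x n + (ω n).1 - (ω n).2) :
    (∀ n : ℤ, y n = d - 2 → d ≤ y (n + 1)) ∧
    (∀ n : ℤ, ¬(y n = d - 2 ∧ y (n + 1) = d - 2)) := by
  have key : ∀ n : ℤ, y n = d - 2 → d ≤ y (n + 1) := by
    intro n h
    have h1 := hy n
    have h2 := hy (n + 1)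
    have h3 := hx n
    have h4 := hx (n + 1)
    have h5 := hω1 n
    have h6 := hω2 n
    have h7 := hω1 (n + 1)
    have h8 := hω2 (n + 1)
    have h9 := hchain n
    omega
  refine ⟨key, fun n ⟨h1, h2⟩ => ?_⟩
  have := key n h1
  omega
end

section
/- For the bit-shift channel: for every L ≥ 1, neither the word (d − 2, d, d, …, d, d − 2) (with L letters d between the two occurrences of d − 2) nor the word (d − 2, d, d, …, d, d − 1) (with L letters d) occurs in any output sequence y ∈ O. -/
/-- For the bit-shift channel: for every `L ≥ 1`, neither the word
`(d − 2, d, …, d, d − 2)` (with `L` letters `d` in the middle) nor the word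
`(d − 2, d, …, d, d − 1)` (with `L` letters `d`) occurs in any output sequence. -/
theorem stmt13 (d k : ℤ) (hd : 2 ≤ d) (hdk : d < k)
    (x : ℤ → ℤ) (hx : ∀ n : ℤ, d ≤ x n ∧ x n ≤ k)
    (ω : ℤ → ℤ × ℤ)
    (hω1 : ∀ n : ℤ, (ω n).1 = -1 ∨ (ω n).1 = 0 ∨ (ω n).1 = 1)
    (hω2 : ∀ n : ℤ, (ω n).2 = -1 ∨ (ω n).2 = 0 ∨ (ω n).2 = 1)
    (hchain : ∀ n : ℤ, (ω n).2 = (ω (n + 1)).1)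
    (y : ℤ → ℤ) (hy : ∀ n : ℤ, y n = x n + (ω n).1 - (ω n).2)
    (L : ℕ) (hL : 1 ≤ L) (m : ℤ) :
    ¬(y m = d - 2 ∧ (∀ i : ℕ, 1 ≤ i → i ≤ L → y (m + i) = d) ∧
        y (m + L + 1) = d - 2) ∧
    ¬(y m = d - 2 ∧ (∀ i : ℕ, 1 ≤ i → i ≤ L → y (m + i) = d) ∧
        y (m + L + 1) = d - 1) := by
  have main : ∀ (c : ℤ), c ≤ d - 1 → ¬(y m = d - 2 ∧
      (∀ i : ℕ, 1 ≤ i → i ≤ L → y (m + i) = d) ∧ y (m + L + 1) = c) := by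
    rintro c hc ⟨h0, hmid, hend⟩
    have key : ∀ i : ℕ, i ≤ L → (ω (m + i)).2 = 1 := by
      intro i
      induction i with
      | zero =>
        intro _
        have hym := hy m
        have hx' := (hx m).1
        have h1 := hω1 m
        have h2 := hω2 m
        push_cast
        simp only [add_zero]
        omega
      | succ i ih =>
        intro hiL
        have hprev : (ω (m + i)).2 = 1 := ih (by omega)
        have hch := hchain (m + i)
        have hyv := hmid (i + 1) (by omega) hiL
        have hyd := hy (m + ((i : ℤ) + 1))
        have hx' := (hx (m + ((i : ℤ) + 1))).1
        have h2 := hω2 (m + ((i : ℤ) + 1))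
        have e : m + ((i : ℤ) + 1) = m + (i : ℤ) + 1 := by ring
        rw [e] at hyd hx' h2
        push_cast at hyv ⊢
        rw [show m + ((i : ℤ) + 1) = m + (i : ℤ) + 1 from by ring] at hyv ⊢
        omega
    have hlast : (ω (m + L)).2 = 1 := key L le_rfl
    have hch := hchain (m + L)
    have hyd := hy (m + L + 1)
    have hx' := (hx (m + L + 1)).1
    have h2 := hω2 (m + L + 1)
    omega
  exact ⟨main (d - 2) (by omega), main (d - 1) (by omega)⟩
end

section
/- For the bit-shift channel, the output space O has infinitely many minimal forbidden words, i.e. words not occurring in any y ∈ O all of whose proper subwords do occur in some output sequence. Concretely, for every L ≥ 1 the word (d − 2, d, …, d, d − 2) with L letters d in the middle is forbidden, while every proper subword of it occurs in some output sequence. In particular O is not a subshift of finite type. -/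
/-- `y` is an output sequence of the bit-shift channel with parameters `d < k`:
`y = φ(x, ω)` for some admissible input `x ∈ A^ℤ` and jitter `ω ∈ Ω_J`. -/
def IsOutput (d k : ℤ) (y : ℤ → ℤ) : Prop :=
  ∃ (x : ℤ → ℤ) (ω : ℤ → ℤ × ℤ),
    (∀ n : ℤ, d ≤ x n ∧ x n ≤ k) ∧
    (∀ n : ℤ, (ω n).1 = -1 ∨ (ω n).1 = 0 ∨ (ω n).1 = 1) ∧
    (∀ n : ℤ, (ω n).2 = -1 ∨ (ω n).2 = 0 ∨ (ω n).2 = 1) ∧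
    (∀ n : ℤ, (ω n).2 = (ω (n + 1)).1) ∧
    (∀ n : ℤ, y n = x n + (ω n).1 - (ω n).2)

/-- The finite word `u` occurs in the two-sided sequence `y`. -/
def Occurs (u : List ℤ) (y : ℤ → ℤ) : Prop :=
  ∃ m : ℤ, ∀ i : Fin u.length, y (m + (i : ℕ)) = u.get i

/-- The word `u` is forbidden for the output space `O` of the bit-shift channel:
it occurs in no output sequence. -/
def Forbidden (d k : ℤ) (u : List ℤ) : Prop :=
  ∀ y : ℤ → ℤ, IsOutput d k y → ¬ Occurs u y

/- ====== auxiliary material ====== -/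

lemma wlen (d : ℤ) (L : ℕ) : ((d - 2) :: (List.replicate L d ++ [d - 2])).length = L + 2 := by
  simp

lemma wget (d : ℤ) (L i : ℕ) (h : i < ((d - 2) :: (List.replicate L d ++ [d - 2])).length) :
    ((d - 2) :: (List.replicate L d ++ [d - 2]))[i] =
      if i = 0 ∨ i = L + 1 then d - 2 else d := by
  have hi : i < L + 2 := by rwa [wlen] at h
  match i, h with
  | 0, h => simp
  | (j+1), h =>
    rw [List.getElem_cons_succ]
    by_cases hj : j < L
    · rw [List.getElem_append_left (by simpa using hj), List.getElem_replicate,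
        if_neg (by omega)]
    · have hjL : j = L := by omega
      subst hjL
      rw [List.getElem_append_right (by simp), if_pos (by omega)]
      simp

/-- the single-dip sequence: one `d-2` at position 0, `d` elsewhere -/
def ystar (d : ℤ) : ℤ → ℤ := fun n => if n = 0 then d - 2 else d

lemma ystar_isOutput (d k : ℤ) (hdk : d < k) : IsOutput d k (ystar d) := by
  refine ⟨fun _ => d, fun n => (if n ≤ 0 then -1 else 1, if n + 1 ≤ 0 then -1 else 1),
    fun n => ⟨le_refl d, le_of_lt hdk⟩, ?_, ?_, fun n => rfl, ?_⟩
  · intro n; dsimp only; split_ifs <;> simp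
  · intro n; dsimp only; split_ifs <;> simp
  · intro n; simp only [ystar]; split_ifs <;> omega

lemma forb (d k : ℤ) (hd : 2 ≤ d) (L : ℕ) (hL : 1 ≤ L) :
    Forbidden d k ((d - 2) :: (List.replicate L d ++ [d - 2])) := by
  rintro y ⟨x, ω, hx, h1, -, hlink, hyω⟩ ⟨m, hm⟩
  have hy : ∀ n, y n = x n + (ω n).1 - (ω (n + 1)).1 := fun n => by rw [hyω n, hlink n]
  have hv : ∀ i : ℕ, i < L + 2 →
      y (m + (i : ℕ)) = if i = 0 ∨ i = L + 1 then d - 2 else d := by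
    intro i hi
    have h := hm ⟨i, by rw [wlen]; exact hi⟩
    rw [h, List.get_eq_getElem, wget]
  have key : ∀ j : ℕ, j ≤ L → (ω (m + 1 + (j : ℕ))).1 = 1 := by
    intro j
    induction j with
    | zero =>
      intro _
      have h0 := hv 0 (by omega)
      rw [if_pos (Or.inl rfl)] at h0
      simp only [Nat.cast_zero, add_zero] at h0 ⊢
      have e1 := hy m
      have e2 := (hx m).1
      have e3 := h1 m
      have e4 := h1 (m + 1)
      omega
    | succ j ih =>
      intro hj
      have hprev := ih (by omega)
      have hvj := hv (j + 1) (by omega)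
      rw [if_neg (by omega)] at hvj
      have e : (m : ℤ) + ((j + 1 : ℕ) : ℤ) = m + 1 + (j : ℕ) := by push_cast; ring
      rw [e] at hvj
      have e' : (m : ℤ) + 1 + ((j + 1 : ℕ) : ℤ) = m + 1 + (j : ℕ) + 1 := by push_cast; ring
      rw [e']
      have e1 := hy (m + 1 + (j : ℕ))
      have e2 := (hx (m + 1 + (j : ℕ))).1
      have e3 := h1 (m + 1 + (j : ℕ) + 1)
      omega
  have hk := key L le_rfl
  have hlast := hv (L + 1) (by omega)
  rw [if_pos (Or.inr rfl)] at hlast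
  have e : (m : ℤ) + ((L + 1 : ℕ) : ℤ) = m + 1 + (L : ℕ) := by push_cast; ring
  rw [e] at hlast
  have e1 := hy (m + 1 + (L : ℕ))
  have e2 := (hx (m + 1 + (L : ℕ))).1
  have e3 := h1 (m + 1 + (L : ℕ) + 1)
  omega

/-- For every `L ≥ 1` the word `(d−2, d, …, d, d−2)` (`L` letters `d` in the
middle) is forbidden for the output space `O`, while every proper (contiguous) subword of it
occurs in some output sequence; hence `O` has infinitely many minimal forbidden words.
In particular `O` is not a subshift of finite type: there is no `N` such that every sequence
over the alphabet `B = {d−2, …, k+2}` all of whose length-`N` windows occur in some output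
sequence is itself an output sequence. -/
theorem stmt14 (d k : ℤ) (hd : 2 ≤ d) (hdk : d < k) :
    (∀ L : ℕ, 1 ≤ L →
      Forbidden d k ((d - 2) :: (List.replicate L d ++ [d - 2]))) ∧
    (∀ L : ℕ, 1 ≤ L → ∀ a b : ℕ,
      a + b ≤ L + 2 → b < L + 2 →
      ¬ Forbidden d k
        ((((d - 2) :: (List.replicate L d ++ [d - 2])).drop a).take b)) ∧
    ¬ ∃ N : ℕ, ∀ y : ℤ → ℤ,
        (∀ n : ℤ, d - 2 ≤ y n ∧ y n ≤ k + 2) →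
        (∀ m : ℤ, ∃ z : ℤ → ℤ, IsOutput d k z ∧
          ∃ m' : ℤ, ∀ i : Fin N, z (m' + (i : ℕ)) = y (m + (i : ℕ))) →
        IsOutput d k y := by
  refine ⟨fun L hL => forb d k hd L hL, ?_, ?_⟩
  · -- every proper subword occurs in `ystar d`
    intro L hL a b hab hb hforb
    set w : List ℤ := (d - 2) :: (List.replicate L d ++ [d - 2]) with hw
    set u : List ℤ := (w.drop a).take b with hu
    have hul : u.length = b := by
      simp only [hu, hw, List.length_take, List.length_drop, wlen]
      omega
    have huget : ∀ (i : ℕ) (h : i < u.length),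
        u[i] = if a + i = 0 ∨ a + i = L + 1 then d - 2 else d := by
      intro i h
      have hi : i < b := by rwa [hul] at h
      have h2 : a + i < L + 2 := by omega
      simp only [hu, hw]
      rw [List.getElem_take, List.getElem_drop, wget]
    apply hforb (ystar d) (ystar_isOutput d k hdk)
    rcases Nat.eq_zero_or_pos a with ha | ha
    · subst ha
      refine ⟨0, fun i => ?_⟩
      have hi : (i : ℕ) < b := by have := i.2; omega
      rw [List.get_eq_getElem, huget i i.2]
      simp only [ystar]
      split_ifs <;> omega
    · refine ⟨(a : ℤ) - ((L : ℤ) + 1), fun i => ?_⟩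
      have hi : (i : ℕ) < b := by have := i.2; omega
      rw [List.get_eq_getElem, huget i i.2]
      simp only [ystar]
      split_ifs <;> omega
  · -- not SFT
    rintro ⟨N, hN⟩
    set L : ℕ := max N 1 with hLdef
    have hNL : N ≤ L := le_max_left _ _
    have hL1 : 1 ≤ L := le_max_right _ _
    set Y : ℤ → ℤ := fun n => if n = 0 ∨ n = (L : ℤ) + 1 then d - 2 else d with hY
    have hbd : ∀ n : ℤ, d - 2 ≤ Y n ∧ Y n ≤ k + 2 := by
      intro n; simp only [hY]; split_ifs <;> omega
    have hwin : ∀ m : ℤ, ∃ z : ℤ → ℤ, IsOutput d k z ∧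
        ∃ m' : ℤ, ∀ i : Fin N, z (m' + (i : ℕ)) = Y (m + (i : ℕ)) := by
      intro m
      refine ⟨ystar d, ystar_isOutput d k hdk, ?_⟩
      by_cases hc : m ≤ 0 ∧ 0 ≤ m + N - 1
      · refine ⟨m, fun i => ?_⟩
        have hi : (i : ℕ) < N := i.2
        simp only [ystar, hY]
        split_ifs <;> omega
      · refine ⟨m - ((L : ℤ) + 1), fun i => ?_⟩
        have hi : (i : ℕ) < N := i.2
        push_neg at hc
        simp only [ystar, hY]
        split_ifs <;> omega
    have hout : IsOutput d k Y := hN Y hbd hwin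
    refine forb d k hd L hL1 Y hout ⟨0, fun i => ?_⟩
    have hi : (i : ℕ) < L + 2 := lt_of_lt_of_eq i.2 (wlen d L)
    rw [List.get_eq_getElem, wget]
    simp only [hY]
    split_ifs <;> omega
end

section
/- For the bit-shift channel with iid input: let (X_n) be iid with values in A = {d, …, k}, ℙ(X_i = d) = p_d > 0, let the jitter process (ω_n) be distributed according to the Markov measure J_ε (independent of X), and let Y_n = X_n + ω_{n,1} − ω_{n,2}. Then, conditionally on the event {Y_n = d − 2}, the past (…, Y_{n−2}, Y_{n−1}) and the future (Y_{n+1}, Y_{n+2}, …) are independent. -/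
open MeasureTheory ProbabilityTheory

/-- For the bit-shift channel with iid input: let `(X_n)` be iid with values
in `A = {d, …, k}` and `ℙ(X_i = d) = p_d > 0`, let the jitter come from an iid sequence
`(σ_n)` with `ℙ(σ_n = ±1) = ε`, `ℙ(σ_n = 0) = 1 − 2ε`, independent of `X`, and let
`Y_n = X_n + σ_n − σ_{n+1}`. Then, conditionally on the event `{Y_n = d − 2}`, the past
`(…, Y_{n−2}, Y_{n−1})` and the future `(Y_{n+1}, Y_{n+2}, …)` are independent. -/
theorem stmt15 {Ω : Type*} [MeasurableSpace Ω] (μ : Measure Ω) [IsProbabilityMeasure μ]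
    (d k : ℤ) (hd : 2 ≤ d) (hdk : d < k)
    (ε : ℝ) (hε : 0 < ε) (hε' : ε < 1 / 2)
    (p : ℤ → ℝ) (hpd : 0 < p d)
    (X : ℤ → Ω → ℤ) (σs : ℤ → Ω → ℤ)
    (hXmeas : ∀ i : ℤ, Measurable (X i)) (hσmeas : ∀ i : ℤ, Measurable (σs i))
    (hXval : ∀ (i : ℤ) (w : Ω), d ≤ X i w ∧ X i w ≤ k)
    (hσval : ∀ (i : ℤ) (w : Ω), σs i w = -1 ∨ σs i w = 0 ∨ σs i w = 1)
    (hXdist : ∀ (i ℓ : ℤ), (μ {w | X i w = ℓ}).toReal = p ℓ)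
    (hσdist : ∀ i : ℤ, (μ {w | σs i w = 1}).toReal = ε ∧
      (μ {w | σs i w = -1}).toReal = ε ∧ (μ {w | σs i w = 0}).toReal = 1 - 2 * ε)
    (hindep : iIndepFun (Sum.elim X σs) μ)
    (Y : ℤ → Ω → ℤ) (hY : ∀ (n : ℤ) (w : Ω), Y n w = X n w + σs n w - σs (n + 1) w)
    (n : ℤ) :
    IndepFun (fun w => fun m : {m : ℤ // m < n} => Y (m : ℤ) w)
             (fun w => fun m : {m : ℤ // n < m} => Y (m : ℤ) w)
             (μ[|{w | Y n w = d - 2}]) := by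
  classical
  set E : Set Ω := {w | Y n w = d - 2} with hEdef
  -- characterization of the event
  have hEchar : ∀ w : Ω, w ∈ E ↔ X n w = d ∧ σs n w = -1 ∧ σs (n + 1) w = 1 := by
    intro w
    have h1 := hXval n w
    have h2 := hσval n w
    have h3 := hσval (n + 1) w
    have h4 := hY n w
    simp only [hEdef, Set.mem_setOf_eq]
    omega
  have hEeq : E = {w | X n w = d} ∩ ({w | σs n w = -1} ∩ {w | σs (n + 1) w = 1}) := by
    ext w
    simp only [Set.mem_inter_iff, Set.mem_setOf_eq]
    exact hEchar w
  -- the event is measurable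
  have hEmeas : MeasurableSet E := by
    rw [hEeq]
    exact (((hXmeas n) (measurableSet_singleton d)).inter
      (((hσmeas n) (measurableSet_singleton (-1))).inter
        ((hσmeas (n + 1)) (measurableSet_singleton 1))))
  -- the comap σ-algebras
  set ms : ℤ ⊕ ℤ → MeasurableSpace Ω :=
    fun i => MeasurableSpace.comap (Sum.elim X σs i) inferInstance with hmsdef
  have hiI : iIndep ms μ := (iIndepFun_iff_iIndep _ _ _).1 hindep
  have h_le : ∀ i, ms i ≤ ‹MeasurableSpace Ω› := by
    intro i
    cases i with
    | inl m => exact MeasurableSpace.comap_le_iff_le_map.2 (hXmeas m)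
    | inr m => exact MeasurableSpace.comap_le_iff_le_map.2 (hσmeas m)
  have hcomap : ∀ i, Measurable[ms i] (Sum.elim X σs i) := fun i =>
    measurable_iff_comap_le.2 le_rfl
  -- index groups
  set Lset : Set (ℤ ⊕ ℤ) := {i | Sum.elim (fun m => m < n) (fun m => m < n) i} with hLdef
  set Rset : Set (ℤ ⊕ ℤ) := {i | Sum.elim (fun m => n < m) (fun m => n + 1 < m) i} with hRdef
  set Mset : Set (ℤ ⊕ ℤ) := {Sum.inl n, Sum.inr n, Sum.inr (n + 1)} with hMdef
  set mL : MeasurableSpace Ω := ⨆ i ∈ Lset, ms i with hmL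
  set mR : MeasurableSpace Ω := ⨆ i ∈ Rset, ms i with hmR
  set mM : MeasurableSpace Ω := ⨆ i ∈ Mset, ms i with hmM
  set mRM : MeasurableSpace Ω := ⨆ i ∈ Rset ∪ Mset, ms i with hmRM
  have hdisjLRM : Disjoint Lset (Rset ∪ Mset) := by
    rw [Set.disjoint_left]
    rintro (m | m) hi hj <;>
      simp only [hLdef, hRdef, hMdef, Set.mem_setOf_eq, Sum.elim_inl, Sum.elim_inr,
        Set.mem_union, Set.mem_insert_iff, Set.mem_singleton_iff, Sum.inl.injEq,
        Sum.inr.injEq, reduceCtorEq, or_false, false_or] at hi hj <;> omega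
  have hdisjRM : Disjoint Rset Mset := by
    rw [Set.disjoint_left]
    rintro (m | m) hi hj <;>
      simp only [hRdef, hMdef, Set.mem_setOf_eq, Sum.elim_inl, Sum.elim_inr,
        Set.mem_insert_iff, Set.mem_singleton_iff, Sum.inl.injEq,
        Sum.inr.injEq, reduceCtorEq, or_false, false_or] at hi hj <;> omega
  have hIndepLRM : Indep mL mRM μ := indep_iSup_of_disjoint h_le hiI hdisjLRM
  have hIndepRM : Indep mR mM μ := indep_iSup_of_disjoint h_le hiI hdisjRM
  -- E is measurable w.r.t. the middle σ-algebra
  have hXnM : MeasurableSet[ms (Sum.inl n)] {w | X n w = d} :=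
    ⟨{d}, trivial, rfl⟩
  have hσnM : MeasurableSet[ms (Sum.inr n)] {w | σs n w = -1} :=
    ⟨{-1}, trivial, rfl⟩
  have hσn1M : MeasurableSet[ms (Sum.inr (n + 1))] {w | σs (n + 1) w = 1} :=
    ⟨{1}, trivial, rfl⟩
  have hmemM1 : Sum.inl n ∈ Mset := by simp [hMdef]
  have hmemM2 : Sum.inr n ∈ Mset := by simp [hMdef]
  have hmemM3 : Sum.inr (n + 1) ∈ Mset := by simp [hMdef]
  have hle1 : ms (Sum.inl n) ≤ mM :=
    le_iSup₂ (f := fun i (_ : i ∈ Mset) => ms i) (Sum.inl n) hmemM1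
  have hle2 : ms (Sum.inr n) ≤ mM :=
    le_iSup₂ (f := fun i (_ : i ∈ Mset) => ms i) (Sum.inr n) hmemM2
  have hle3 : ms (Sum.inr (n + 1)) ≤ mM :=
    le_iSup₂ (f := fun i (_ : i ∈ Mset) => ms i) (Sum.inr (n + 1)) hmemM3
  have hEmM : MeasurableSet[mM] E := by
    rw [hEeq]
    exact MeasurableSet.inter (hle1 _ hXnM)
      (MeasurableSet.inter (hle2 _ hσnM) (hle3 _ hσn1M))
  have hmRle : mR ≤ mRM := biSup_mono Set.subset_union_left
  have hmMle : mM ≤ mRM := biSup_mono Set.subset_union_right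
  -- the measure of E factorizes and is positive
  set Pairset : Set (ℤ ⊕ ℤ) := {Sum.inr n, Sum.inr (n + 1)} with hPairdef
  have hdisjA : Disjoint ({Sum.inl n} : Set (ℤ ⊕ ℤ)) Pairset := by
    rw [Set.disjoint_left]
    rintro i hi hj
    simp only [Set.mem_singleton_iff] at hi
    subst hi
    simp [hPairdef] at hj
  have hA_BC : Indep (ms (Sum.inl n)) (⨆ i ∈ Pairset, ms i) μ := by
    have h := indep_iSup_of_disjoint h_le hiI hdisjA
    exact indep_of_indep_of_le_left h
      (le_iSup₂ (f := fun i (_ : i ∈ ({Sum.inl n} : Set (ℤ ⊕ ℤ))) => ms i)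
        (Sum.inl n) (Set.mem_singleton _))
  have hBC : Indep (ms (Sum.inr n)) (ms (Sum.inr (n + 1))) μ :=
    hiI.indep (by simp)
  have hlePair1 : ms (Sum.inr n) ≤ ⨆ i ∈ Pairset, ms i :=
    le_iSup₂ (f := fun i (_ : i ∈ Pairset) => ms i) (Sum.inr n) (by simp [hPairdef])
  have hlePair2 : ms (Sum.inr (n + 1)) ≤ ⨆ i ∈ Pairset, ms i :=
    le_iSup₂ (f := fun i (_ : i ∈ Pairset) => ms i) (Sum.inr (n + 1)) (by simp [hPairdef])
  have hABC : μ E = μ {w | X n w = d} * (μ {w | σs n w = -1} * μ {w | σs (n + 1) w = 1}) := by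
    rw [hEeq, (Indep_iff _ _ _).1 hA_BC _ _ hXnM
        (MeasurableSet.inter (hlePair1 _ hσnM) (hlePair2 _ hσn1M)),
      (Indep_iff _ _ _).1 hBC _ _ hσnM hσn1M]
  have hμEtoReal : (μ E).toReal = p d * (ε * ε) := by
    rw [hABC, ENNReal.toReal_mul, ENNReal.toReal_mul, hXdist n d, (hσdist n).2.1,
      (hσdist (n + 1)).1]
  have hμE_ne : μ E ≠ 0 := by
    intro h0
    rw [h0, ENNReal.toReal_zero] at hμEtoReal
    have hpos : 0 < p d * (ε * ε) := mul_pos hpd (mul_pos hε hε)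
    linarith
  have hμE_fin : μ E ≠ ⊤ := measure_ne_top μ E
  -- factorization facts
  have fact1 : ∀ U : Set Ω, MeasurableSet[mL] U → μ (U ∩ E) = μ U * μ E :=
    fun U hU => (Indep_iff _ _ _).1 hIndepLRM U E hU (hmMle _ hEmM)
  have fact2 : ∀ V : Set Ω, MeasurableSet[mR] V → μ (V ∩ E) = μ V * μ E :=
    fun V hV => (Indep_iff _ _ _).1 hIndepRM V E hV hEmM
  have fact3 : ∀ U V : Set Ω, MeasurableSet[mL] U → MeasurableSet[mR] V →
      μ (U ∩ (V ∩ E)) = μ U * (μ V * μ E) := by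
    intro U V hU hV
    rw [(Indep_iff _ _ _).1 hIndepLRM U (V ∩ E) hU
      ((hmRle _ hV).inter (hmMle _ hEmM)), fact2 V hV]
  -- the modified jitter
  set σt : ℤ → Ω → ℤ :=
    fun j w => if j = n then -1 else if j = n + 1 then 1 else σs j w with hσtdef
  set P' : Ω → ({m : ℤ // m < n} → ℤ) :=
    fun w m => X (m : ℤ) w + σt (m : ℤ) w - σt ((m : ℤ) + 1) w with hP'def
  set F' : Ω → ({m : ℤ // n < m} → ℤ) :=
    fun w m => X (m : ℤ) w + σt (m : ℤ) w - σt ((m : ℤ) + 1) w with hF'def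
  -- measurability of P' w.r.t. mL
  have hXmL : ∀ m : ℤ, m < n → Measurable[mL] (X m) := by
    intro m hm
    exact (hcomap (Sum.inl m)).mono
      (le_iSup₂ (f := fun i (_ : i ∈ Lset) => ms i) (Sum.inl m) (by exact hm)) le_rfl
  have hσtmL : ∀ j : ℤ, j ≤ n → Measurable[mL] (σt j) := by
    intro j hj
    rcases eq_or_lt_of_le hj with h | h
    · have : σt j = fun _ => (-1 : ℤ) := funext fun w => if_pos h
      rw [this]; exact measurable_const
    · have h1 : j ≠ n := by omega
      have h2 : j ≠ n + 1 := by omega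
      have : σt j = σs j := funext fun w => by simp [hσtdef, h1, h2]
      rw [this]
      exact (hcomap (Sum.inr j)).mono
        (le_iSup₂ (f := fun i (_ : i ∈ Lset) => ms i) (Sum.inr j) (by exact h)) le_rfl
  have hP'meas : Measurable[mL] P' := by
    refine @measurable_pi_lambda Ω _ _ mL _ P' fun m => ?_
    simp only [hP'def]
    exact ((hXmL m m.2).add (hσtmL m (le_of_lt m.2))).sub (hσtmL ((m : ℤ) + 1) (by omega))
  -- measurability of F' w.r.t. mR
  have hXmR : ∀ m : ℤ, n < m → Measurable[mR] (X m) := by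
    intro m hm
    exact (hcomap (Sum.inl m)).mono
      (le_iSup₂ (f := fun i (_ : i ∈ Rset) => ms i) (Sum.inl m) (by exact hm)) le_rfl
  have hσtmR : ∀ j : ℤ, n + 1 ≤ j → Measurable[mR] (σt j) := by
    intro j hj
    rcases eq_or_lt_of_le hj with h | h
    · have : σt j = fun _ => (1 : ℤ) := funext fun w => by
        simp only [hσtdef]
        rw [if_neg (show ¬ j = n by omega), if_pos h.symm]
      rw [this]; exact measurable_const
    · have h1 : j ≠ n := by omega
      have h2 : j ≠ n + 1 := by omega
      have : σt j = σs j := funext fun w => by simp [hσtdef, h1, h2]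
      rw [this]
      exact (hcomap (Sum.inr j)).mono
        (le_iSup₂ (f := fun i (_ : i ∈ Rset) => ms i) (Sum.inr j) (by exact h)) le_rfl
  have hF'meas : Measurable[mR] F' := by
    refine @measurable_pi_lambda Ω _ _ mR _ F' fun m => ?_
    simp only [hF'def]
    exact ((hXmR m m.2).add (hσtmR m (by omega))).sub (hσtmR ((m : ℤ) + 1) (by omega))
  -- P' and F' are independent under the conditional measure
  have hinv : (μ E)⁻¹ * μ E = 1 := ENNReal.inv_mul_cancel hμE_ne hμE_fin
  have hIndepP'F' : IndepFun P' F' (μ[|E]) := by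
    rw [indepFun_iff_measure_inter_preimage_eq_mul]
    intro S T hS hT
    have hU : MeasurableSet[mL] (P' ⁻¹' S) := hP'meas hS
    have hV : MeasurableSet[mR] (F' ⁻¹' T) := hF'meas hT
    rw [cond_apply hEmeas, cond_apply hEmeas, cond_apply hEmeas]
    have e1 : E ∩ (P' ⁻¹' S ∩ F' ⁻¹' T) = P' ⁻¹' S ∩ (F' ⁻¹' T ∩ E) := by
      rw [Set.inter_comm E, Set.inter_assoc]
    have e2 : E ∩ P' ⁻¹' S = P' ⁻¹' S ∩ E := Set.inter_comm _ _
    have e3 : E ∩ F' ⁻¹' T = F' ⁻¹' T ∩ E := Set.inter_comm _ _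
    rw [e1, e2, e3, fact3 _ _ hU hV, fact1 _ hU, fact2 _ hV]
    calc (μ E)⁻¹ * (μ (P' ⁻¹' S) * (μ (F' ⁻¹' T) * μ E))
        = ((μ E)⁻¹ * μ E) * (μ (P' ⁻¹' S) * μ (F' ⁻¹' T)) := by ring
      _ = μ (P' ⁻¹' S) * μ (F' ⁻¹' T) := by rw [hinv, one_mul]
      _ = (((μ E)⁻¹ * μ E) * μ (P' ⁻¹' S)) * (((μ E)⁻¹ * μ E) * μ (F' ⁻¹' T)) := by
          rw [hinv, one_mul, one_mul]
      _ = (μ E)⁻¹ * (μ (P' ⁻¹' S) * μ E) * ((μ E)⁻¹ * (μ (F' ⁻¹' T) * μ E)) := by ring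
  -- almost everywhere, the conditional measure lives on E
  have haeE : ∀ᵐ w ∂(μ[|E]), w ∈ E := by
    rw [ae_iff]
    have : {w : Ω | ¬ w ∈ E} = Eᶜ := rfl
    rw [this, cond_apply hEmeas, Set.inter_compl_self, measure_empty, mul_zero]
  -- on E, σt agrees with σs
  have hsub : ∀ w ∈ E, ∀ j : ℤ, σt j w = σs j w := by
    intro w hw j
    obtain ⟨_, h2, h3⟩ := (hEchar w).1 hw
    simp only [hσtdef]
    by_cases ha : j = n
    · subst ha; rw [if_pos rfl, h2]
    · rw [if_neg ha]
      by_cases hb : j = n + 1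
      · subst hb; rw [if_pos rfl, h3]
      · rw [if_neg hb]
  have hPae : P' =ᵐ[μ[|E]] (fun w => fun m : {m : ℤ // m < n} => Y (m : ℤ) w) := by
    filter_upwards [haeE] with w hw
    funext m
    simp only [hP'def]
    rw [hsub w hw (m : ℤ), hsub w hw ((m : ℤ) + 1), hY]
  have hFae : F' =ᵐ[μ[|E]] (fun w => fun m : {m : ℤ // n < m} => Y (m : ℤ) w) := by
    filter_upwards [haeE] with w hw
    funext m
    simp only [hF'def]
    rw [hsub w hw (m : ℤ), hsub w hw ((m : ℤ) + 1), hY]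
  exact hIndepP'F'.congr hPae hFae
end
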